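/- arXiv:1701.07691 — 8 statements merged into one kernel-verified Lean document; each statement's English description precedes it below -/
import Mathlib

section
/- Let s > 0 and r > 0. Then for every natural number k and every real t ≥ 0 one has t^k e^{-r t^{1/s}} ≤ ((s/r)^s)^k (k!)^s. -/
/-- for `s, r > 0`, every `k : ℕ` and every real `t ≥ 0` one has
`t^k e^{-r t^{1/s}} ≤ ((s/r)^s)^k (k!)^s`. -/
theorem pow_mul_exp_neg_rpow_le (s r : ℝ) (hs : 0 < s) (hr : 0 < r)
    (k : ℕ) (t : ℝ) (ht : 0 ≤ t) :
    t ^ k * Real.exp (-r * t ^ (1/s)) ≤ ((s/r) ^ s) ^ k * (k.factorial : ℝ) ^ s := by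
  set x := t ^ (1/s) with hxdef
  have hx : 0 ≤ x := Real.rpow_nonneg ht _
  have hxs : x ^ s = t := by
    rw [hxdef, ← Real.rpow_mul ht, one_div, inv_mul_cancel₀ hs.ne', Real.rpow_one]
  have h1 : (r * x / s) ^ k / (k.factorial : ℝ) ≤ Real.exp (r * x / s) :=
    Real.pow_div_factorial_le_exp (x := r * x / s) (by positivity) k
  have h2 : x ^ k ≤ (s / r) ^ k * ((k.factorial : ℝ) * Real.exp (r * x / s)) := by
    have hxeq : x = (s / r) * (r * x / s) := by field_simp
    calc x ^ k = (s / r) ^ k * (r * x / s) ^ k := by rw [← mul_pow, ← hxeq]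
      _ ≤ (s / r) ^ k * ((k.factorial : ℝ) * Real.exp (r * x / s)) := by
          apply mul_le_mul_of_nonneg_left _ (by positivity)
          rw [div_le_iff₀ (by positivity : (0:ℝ) < (k.factorial : ℝ))] at h1
          exact h1.trans_eq (mul_comm _ _)
  have h3 : (x ^ k) ^ s ≤ ((s / r) ^ k * ((k.factorial : ℝ) * Real.exp (r * x / s))) ^ s :=
    Real.rpow_le_rpow (by positivity) h2 hs.le
  have hL : (x ^ k) ^ s = t ^ k := by
    rw [← Real.rpow_natCast x k, ← Real.rpow_mul hx, mul_comm, Real.rpow_mul hx,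
      hxs, Real.rpow_natCast]
  have hR : ((s / r) ^ k * ((k.factorial : ℝ) * Real.exp (r * x / s))) ^ s
      = ((s / r) ^ s) ^ k * (k.factorial : ℝ) ^ s * Real.exp (r * x) := by
    rw [Real.mul_rpow (by positivity) (by positivity),
      Real.mul_rpow (by positivity) (by positivity)]
    rw [← Real.rpow_natCast (s/r) k, ← Real.rpow_mul (by positivity), mul_comm (k:ℝ) s,
      Real.rpow_mul (by positivity), Real.rpow_natCast]
    rw [← Real.exp_mul, div_mul_cancel₀ _ hs.ne']
    ring
  rw [hL, hR] at h3
  have hexp : 0 < Real.exp (-r * x) := Real.exp_pos _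
  calc t ^ k * Real.exp (-r * x)
      ≤ ((s / r) ^ s) ^ k * (k.factorial : ℝ) ^ s * Real.exp (r * x) * Real.exp (-r * x) :=
        mul_le_mul_of_nonneg_right h3 hexp.le
    _ = ((s / r) ^ s) ^ k * (k.factorial : ℝ) ^ s := by
        rw [mul_assoc, ← Real.exp_add]; ring_nf; rw [Real.exp_zero, mul_one]
end

section
/- Let s > 0 and h > 0. Then there exist constants C, c > 0 such that for every integer k ≥ 1 there is a natural number t with h^t (t!)^s ≤ C k^t e^{-c k^{1/s}}; equivalently, inf_{t∈ℕ} h^t (t!)^s k^{-t} ≤ C e^{-c k^{1/s}} for all integers k ≥ 1. -/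
/-- for `s, h > 0` there are `C, c > 0` such that for every integer `k ≥ 1`
some natural number `t` satisfies `h^t (t!)^s ≤ C k^t e^{-c k^{1/s}}`. -/
theorem exists_factorial_decay_bound (s h : ℝ) (hs : 0 < s) (hh : 0 < h) :
    ∃ C c : ℝ, 0 < C ∧ 0 < c ∧ ∀ k : ℕ, 1 ≤ k → ∃ t : ℕ,
      h ^ t * ((t.factorial : ℝ)) ^ s ≤
        C * (k : ℝ) ^ t * Real.exp (-c * (k : ℝ) ^ (1/s)) := by
  set A : ℝ := h ^ (1/s) with hA
  have hA0 : 0 < A := Real.rpow_pos_of_pos hh _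
  have hlog2 : (0:ℝ) < Real.log 2 := Real.log_pos (by norm_num)
  refine ⟨(2:ℝ) ^ s, s * Real.log 2 / (2 * A), Real.rpow_pos_of_pos (by norm_num) _,
    by positivity, ?_⟩
  intro k hk
  set x : ℝ := (k:ℝ) ^ (1/s) / (2 * A) with hx
  have hk0 : (0:ℝ) < (k:ℝ) := by exact_mod_cast hk
  have hxk : (0:ℝ) < (k:ℝ) ^ (1/s) := Real.rpow_pos_of_pos hk0 _
  have hx0 : 0 ≤ x := by positivity
  refine ⟨⌊x⌋₊, ?_⟩
  set t : ℕ := ⌊x⌋₊ with ht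
  have htx : (t:ℝ) ≤ x := Nat.floor_le hx0
  have hxt : x - 1 < t := Nat.sub_one_lt_floor x
  -- x^s = k / (2^s * h)
  have hxs : x ^ s = (k:ℝ) / ((2:ℝ) ^ s * h) := by
    rw [hx, Real.div_rpow (le_of_lt hxk) (by positivity),
      Real.mul_rpow (by norm_num) hA0.le, hA,
      ← Real.rpow_mul hk0.le, ← Real.rpow_mul hh.le, one_div,
      inv_mul_cancel₀ hs.ne', Real.rpow_one, Real.rpow_one]
  have hts : ((t:ℝ)) ^ s ≤ (k:ℝ) / ((2:ℝ) ^ s * h) := by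
    rw [← hxs]
    exact Real.rpow_le_rpow (Nat.cast_nonneg _) htx hs.le
  -- factorial bound
  have hfact : ((t.factorial : ℝ)) ^ s ≤ ((t:ℝ) ^ s) ^ t := by
    have h1 : ((t.factorial : ℝ)) ^ s ≤ ((t:ℝ) ^ (t:ℕ)) ^ s := by
      apply Real.rpow_le_rpow (Nat.cast_nonneg _) _ hs.le
      exact_mod_cast Nat.factorial_le_pow t
    refine h1.trans_eq ?_
    rw [← Real.rpow_natCast (t:ℝ) t, ← Real.rpow_mul (Nat.cast_nonneg _),
      mul_comm, Real.rpow_mul (Nat.cast_nonneg _), Real.rpow_natCast]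
  have step1 : h ^ t * ((t.factorial : ℝ)) ^ s ≤ ((k:ℝ) / (2:ℝ) ^ s) ^ t := by
    calc h ^ t * ((t.factorial : ℝ)) ^ s
        ≤ h ^ t * ((k:ℝ) / ((2:ℝ) ^ s * h)) ^ t := by
          refine mul_le_mul_of_nonneg_left (hfact.trans ?_) (by positivity)
          exact pow_le_pow_left₀ (Real.rpow_nonneg (Nat.cast_nonneg _) _) hts t
      _ = (h * ((k:ℝ) / ((2:ℝ) ^ s * h))) ^ t := by rw [mul_pow]
      _ = ((k:ℝ) / (2:ℝ) ^ s) ^ t := by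
          congr 1
          field_simp
  -- exponential bound
  have h2s : (2:ℝ) ^ s = Real.exp (Real.log 2 * s) := by
    rw [Real.rpow_def_of_pos (by norm_num)]
  have hck : (s * Real.log 2 / (2 * A)) * (k:ℝ) ^ (1/s) = s * Real.log 2 * x := by
    rw [hx]; ring
  have hexp : (((2:ℝ) ^ s)⁻¹) ^ t ≤
      (2:ℝ) ^ s * Real.exp (-(s * Real.log 2 / (2 * A)) * (k:ℝ) ^ (1/s)) := by
    rw [h2s, ← Real.exp_neg, ← Real.exp_nat_mul, neg_mul, hck, ← Real.exp_add,
      Real.exp_le_exp]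
    have : s * Real.log 2 * (x - 1) ≤ s * Real.log 2 * t := by
      apply mul_le_mul_of_nonneg_left hxt.le (by positivity)
    nlinarith
  calc h ^ t * ((t.factorial : ℝ)) ^ s ≤ ((k:ℝ) / (2:ℝ) ^ s) ^ t := step1
    _ = (k:ℝ) ^ t * (((2:ℝ) ^ s)⁻¹) ^ t := by rw [div_pow, div_eq_mul_inv, inv_pow]
    _ ≤ (k:ℝ) ^ t * ((2:ℝ) ^ s *
        Real.exp (-(s * Real.log 2 / (2 * A)) * (k:ℝ) ^ (1/s))) := by
          gcongr
    _ = (2:ℝ) ^ s * (k:ℝ) ^ t *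
        Real.exp (-(s * Real.log 2 / (2 * A)) * (k:ℝ) ^ (1/s)) := by ring
end

section
/- Let d ≥ 1, E ⊆ ℝ^d be a non-degenerate parallelepiped, φ be a Schwartz function on ℝ^d, and let f be a continuous E-periodic function such that Σ_{α∈Λ'_E} |c(f,α)| < ∞ and f(x) = Σ_{α∈Λ'_E} c(f,α) e^{i⟨x,α⟩} for all x. Then for every (x,ξ) ∈ ℝ^d × ℝ^d the series Σ_{α∈Λ'_E} c(f,α) conj(φ̂(α−ξ)) e^{i⟨x,α⟩} converges absolutely and V_φf(x,ξ) = e^{-i⟨x,ξ⟩} Σ_{α∈Λ'_E} c(f,α) conj(φ̂(α−ξ)) e^{i⟨x,α⟩}. -/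
open MeasureTheory Filter
open scoped BigOperators InnerProductSpace Topology

noncomputable section

abbrev Euc (d : ℕ) := EuclideanSpace ℝ (Fin d)

/-- The lattice point `∑ i, j i • e i` associated with `j : ℤ^d`. -/
def latPt {d : ℕ} (e : Fin d → Euc d) (j : Fin d → ℤ) : Euc d :=
  ∑ i, (j i : ℝ) • e i

/-- The (closed) parallelepiped spanned by `e`. -/
def paraSet {d : ℕ} (e : Fin d → Euc d) : Set (Euc d) :=
  (fun t : Fin d → ℝ => ∑ i, t i • e i) '' (Set.univ.pi fun _ => Set.Icc (0:ℝ) 1)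

/-- Fourier coefficient `c(f, ξ) = |E|⁻¹ ∫_E f(x) e^{-i⟨x,ξ⟩} dx`. -/
def fourCoeff {d : ℕ} (e : Fin d → Euc d) (f : Euc d → ℂ) (ξ : Euc d) : ℂ :=
  (((volume (paraSet e)).toReal : ℂ))⁻¹ *
    ∫ x in paraSet e, f x * Complex.exp (-(Complex.I) * (⟪x, ξ⟫_ℝ : ℂ))

/-- Iterated partial derivatives along a list of coordinate directions. -/
def pdSeq {d : ℕ} : List (Fin d) → (Euc d → ℂ) → (Euc d → ℂ)
  | [], f => f
  | (i :: L), f => pdSeq L (fun x => fderiv ℝ f x (EuclideanSpace.single i 1))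

/-- The canonical list of directions attached to a multi-index `β`. -/
def mIdxL {d : ℕ} (β : Fin d → ℕ) : List (Fin d) :=
  (List.finRange d).flatMap fun i => List.replicate (β i) i

/-- The multi-index partial derivative `∂^β f`. -/
def pD {d : ℕ} (β : Fin d → ℕ) (f : Euc d → ℂ) : Euc d → ℂ := pdSeq (mIdxL β) f

/-- Fourier transform, normalized as `(2π)^{-d/2} ∫ f(x) e^{-i⟨x,ξ⟩} dx`. -/
def FT {d : ℕ} (f : Euc d → ℂ) (ξ : Euc d) : ℂ :=
  (((2 * Real.pi) ^ (-(d:ℝ)/2) : ℝ) : ℂ) *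
    ∫ x, f x * Complex.exp (-(Complex.I) * (⟪x, ξ⟫_ℝ : ℂ))

/-- Short-time Fourier transform with window `φ`. -/
def STFT {d : ℕ} (φ f : Euc d → ℂ) (x ξ : Euc d) : ℂ :=
  (((2 * Real.pi) ^ (-(d:ℝ)/2) : ℝ) : ℂ) *
    ∫ y, f y * (starRingEnd ℂ) (φ (y - x)) * Complex.exp (-(Complex.I) * (⟪y, ξ⟫_ℝ : ℂ))

/-!
The window `φ` is integrable and the Fourier series of `f` converges absolutely, so the series
may be integrated term by term against `conj (φ (· - x)) e^{-i⟨·,ξ⟩}`. For a single character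
`e^{i⟨y,α⟩}` the substitution `y ↦ y + x` turns the STFT into
`e^{i⟨x,α-ξ⟩} conj (φ̂ (α - ξ))`, and `|φ̂| ≤ (2π)^{-d/2} ‖φ‖₁` gives the absolute convergence.
-/

open Complex

lemma Complex.norm_exp_neg_I_mul_ofReal (r : ℝ) : ‖exp (-I * r)‖ = 1 := by
  rw [neg_mul, ← mul_neg, ← ofReal_neg]
  exact norm_exp_I_mul_ofReal _

lemma integral_tsum_mul_of_summable_norm {α ι 𝕜 : Type*} [MeasurableSpace α] {μ : Measure α}
    [Countable ι] [RCLike 𝕜] {c : ι → 𝕜} (hc : Summable (‖c ·‖)) {u : ι → α → 𝕜} {C : ℝ}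
    (hu : ∀ i, AEStronglyMeasurable (u i) μ) (hC : ∀ i y, ‖u i y‖ ≤ C)
    {g : α → 𝕜} (hg : Integrable g μ) :
    ∫ y, (∑' i, c i * u i y) * g y ∂μ = ∑' i, c i * ∫ y, u i y * g y ∂μ := by
  have hint : ∀ i, Integrable (fun y => c i * u i y * g y) μ := fun i =>
    (hg.bdd_mul (hu i) (ae_of_all _ (hC i))).const_mul (c i) |>.congr
      (ae_of_all _ fun y => (mul_assoc _ _ _).symm)
  have hbound : ∀ i, ∫ y, ‖c i * u i y * g y‖ ∂μ ≤ ‖c i‖ * (C * ∫ y, ‖g y‖ ∂μ) := fun i => by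
    rw [← integral_const_mul, ← integral_const_mul]
    refine integral_mono (hint i).norm ((hg.norm.const_mul C).const_mul _) fun y => ?_
    rw [norm_mul, norm_mul, mul_assoc]
    gcongr
    exact hC i y
  have hsum : Summable fun i => ∫ y, ‖c i * u i y * g y‖ ∂μ :=
    (hc.mul_right _).of_nonneg_of_le (fun i => integral_nonneg fun _ => norm_nonneg _) hbound
  calc ∫ y, (∑' i, c i * u i y) * g y ∂μ = ∫ y, ∑' i, c i * u i y * g y ∂μ := by
        simp_rw [tsum_mul_right]
    _ = ∑' i, ∫ y, c i * u i y * g y ∂μ := (integral_tsum_of_summable_integral_norm hint hsum).symm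
    _ = ∑' i, c i * ∫ y, u i y * g y ∂μ := by simp_rw [mul_assoc, integral_const_mul]

section Fourier

variable {d : ℕ}

lemma norm_FT_le (φ : Euc d → ℂ) (η : Euc d) :
    ‖FT φ η‖ ≤ (2 * Real.pi) ^ (-(d:ℝ)/2) * ∫ y, ‖φ y‖ := by
  rw [FT, norm_mul, norm_real, Real.norm_of_nonneg (by positivity)]
  gcongr
  refine (norm_integral_le_integral_norm _).trans_eq (integral_congr_ae (ae_of_all _ fun y => ?_))
  simp only [norm_mul, norm_exp_neg_I_mul_ofReal, mul_one]

lemma conj_FT (φ : Euc d → ℂ) (η : Euc d) :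
    starRingEnd ℂ (FT φ η) = (((2 * Real.pi) ^ (-(d:ℝ)/2) : ℝ) : ℂ) *
      ∫ y, starRingEnd ℂ (φ y) * exp (I * (⟪y, η⟫_ℝ : ℂ)) := by
  rw [FT, map_mul, conj_ofReal, ← integral_conj]
  congr 1
  refine integral_congr_ae (ae_of_all _ fun y => ?_)
  simp only [map_mul, ← exp_conj, map_neg, conj_I, conj_ofReal, neg_mul, neg_neg]

lemma STFT_exp_inner (φ : Euc d → ℂ) (α x ξ : Euc d) :
    STFT φ (fun y => exp (I * (⟪y, α⟫_ℝ : ℂ))) x ξ =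
      exp (-I * (⟪x, ξ⟫_ℝ : ℂ)) * starRingEnd ℂ (FT φ (α - ξ)) * exp (I * (⟪x, α⟫_ℝ : ℂ)) := by
  have hshift : ∀ y : Euc d,
      exp (I * (⟪y + x, α⟫_ℝ : ℂ)) * starRingEnd ℂ (φ (y + x - x)) *
          exp (-I * (⟪y + x, ξ⟫_ℝ : ℂ)) =
        exp (-I * (⟪x, ξ⟫_ℝ : ℂ)) * exp (I * (⟪x, α⟫_ℝ : ℂ)) *
          (starRingEnd ℂ (φ y) * exp (I * (⟪y, α - ξ⟫_ℝ : ℂ))) := fun y => by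
    simp only [add_sub_cancel_right, inner_add_left, inner_sub_right, ofReal_add, ofReal_sub,
      mul_add, mul_sub, exp_add, exp_sub, neg_mul, exp_neg]
    field_simp
  rw [STFT, ← integral_add_right_eq_self _ x]
  simp only [hshift]
  rw [integral_const_mul, conj_FT]
  ring

lemma summable_norm_mul_conj_FT_mul_exp {ι : Type*} {c : ι → ℂ} (hc : Summable (‖c ·‖))
    (φ : Euc d → ℂ) (a : ι → Euc d) (x ξ : Euc d) :
    Summable fun i => ‖c i * starRingEnd ℂ (FT φ (a i - ξ)) * exp (I * (⟪x, a i⟫_ℝ : ℂ))‖ := by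
  refine (hc.mul_right ((2 * Real.pi) ^ (-(d:ℝ)/2) * ∫ y, ‖φ y‖)).of_nonneg_of_le
    (fun i => norm_nonneg _) fun i => ?_
  rw [norm_mul, norm_mul, norm_exp_I_mul_ofReal, mul_one, RCLike.norm_conj]
  gcongr
  exact norm_FT_le φ _

lemma STFT_tsum_mul_exp_inner {ι : Type*} [Countable ι] {φ : Euc d → ℂ} (hφ : Integrable φ)
    {c : ι → ℂ} (hc : Summable (‖c ·‖)) (a : ι → Euc d) (x ξ : Euc d) :
    STFT φ (fun y => ∑' i, c i * exp (I * (⟪y, a i⟫_ℝ : ℂ))) x ξ =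
      exp (-I * (⟪x, ξ⟫_ℝ : ℂ)) *
        ∑' i, c i * starRingEnd ℂ (FT φ (a i - ξ)) * exp (I * (⟪x, a i⟫_ℝ : ℂ)) := by
  have hwindow : Integrable (fun y => starRingEnd ℂ (φ (y - x)) * exp (-I * (⟪y, ξ⟫_ℝ : ℂ))) :=
    (conjCLE.toContinuousLinearMap.integrable_comp (hφ.comp_sub_right x)).mul_bdd (by fun_prop)
      (ae_of_all _ fun y => (norm_exp_neg_I_mul_ofReal _).le)
  calc STFT φ (fun y => ∑' i, c i * exp (I * (⟪y, a i⟫_ℝ : ℂ))) x ξ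
      = ∑' i, c i * STFT φ (fun y => exp (I * (⟪y, a i⟫_ℝ : ℂ))) x ξ := by
        simp only [STFT, mul_assoc]
        rw [integral_tsum_mul_of_summable_norm hc (C := 1) (fun i => by fun_prop)
          (fun i y => (norm_exp_I_mul_ofReal _).le) hwindow, ← tsum_mul_left]
        congr 1 with i
        ring
    _ = _ := by
        simp_rw [STFT_exp_inner, ← tsum_mul_left]
        congr 1 with i
        ring

end Fourier

theorem stft_of_periodic_fourier_series_general
    {d : ℕ}
    (e e' : Fin d → Euc d)
    (φ : SchwartzMap (Euc d) ℂ)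
    (f : Euc d → ℂ)
    (hsum : Summable fun ι : Fin d → ℤ => ‖fourCoeff e f (latPt e' ι)‖)
    (hrepr : ∀ x : Euc d,
      f x = ∑' ι : Fin d → ℤ,
        fourCoeff e f (latPt e' ι) * Complex.exp (Complex.I * (⟪x, latPt e' ι⟫_ℝ : ℂ))) :
    ∀ x ξ : Euc d,
      Summable (fun ι : Fin d → ℤ =>
        ‖fourCoeff e f (latPt e' ι) * (starRingEnd ℂ) (FT (⇑φ) (latPt e' ι - ξ)) *
            Complex.exp (Complex.I * (⟪x, latPt e' ι⟫_ℝ : ℂ))‖) ∧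
      STFT (⇑φ) f x ξ =
        Complex.exp (-(Complex.I) * (⟪x, ξ⟫_ℝ : ℂ)) *
          ∑' ι : Fin d → ℤ,
            fourCoeff e f (latPt e' ι) * (starRingEnd ℂ) (FT (⇑φ) (latPt e' ι - ξ)) *
              Complex.exp (Complex.I * (⟪x, latPt e' ι⟫_ℝ : ℂ)) := by
  intro x ξ
  refine ⟨summable_norm_mul_conj_FT_mul_exp hsum φ (latPt e') x ξ, ?_⟩
  rw [← STFT_tsum_mul_exp_inner φ.integrable hsum (latPt e') x ξ]
  exact congrArg (STFT φ · x ξ) (funext hrepr)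

/-- for a continuous `E`-periodic function with absolutely convergent Fourier
series and a Schwartz window `φ`, the short-time Fourier transform is given by
`V_φf(x,ξ) = e^{-i⟨x,ξ⟩} Σ_α c(f,α) conj(φ̂(α−ξ)) e^{i⟨x,α⟩}`, the series converging
absolutely. -/
theorem stft_of_periodic_fourier_series
    {d : ℕ} (hd : 1 ≤ d)
    (e e' : Fin d → Euc d) (he : LinearIndependent ℝ e)
    (hdual : ∀ j k, ⟪e j, e' k⟫_ℝ = if j = k then 2 * Real.pi else 0)
    (φ : SchwartzMap (Euc d) ℂ)
    (f : Euc d → ℂ) (hfc : Continuous f)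
    (hper : ∀ (x : Euc d) (j : Fin d → ℤ), f (x + latPt e j) = f x)
    (hsum : Summable fun ι : Fin d → ℤ => ‖fourCoeff e f (latPt e' ι)‖)
    (hrepr : ∀ x : Euc d,
      f x = ∑' ι : Fin d → ℤ,
        fourCoeff e f (latPt e' ι) * Complex.exp (Complex.I * (⟪x, latPt e' ι⟫_ℝ : ℂ))) :
    ∀ x ξ : Euc d,
      Summable (fun ι : Fin d → ℤ =>
        ‖fourCoeff e f (latPt e' ι) * (starRingEnd ℂ) (FT (⇑φ) (latPt e' ι - ξ)) *
            Complex.exp (Complex.I * (⟪x, latPt e' ι⟫_ℝ : ℂ))‖) ∧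
      STFT (⇑φ) f x ξ =
        Complex.exp (-(Complex.I) * (⟪x, ξ⟫_ℝ : ℂ)) *
          ∑' ι : Fin d → ℤ,
            fourCoeff e f (latPt e' ι) * (starRingEnd ℂ) (FT (⇑φ) (latPt e' ι - ξ)) *
              Complex.exp (Complex.I * (⟪x, latPt e' ι⟫_ℝ : ℂ)) :=
  stft_of_periodic_fourier_series_general e e' φ f hsum hrepr
end
end

section
/- Let d ≥ 1, E ⊆ ℝ^d be a non-degenerate parallelepiped, f be an E-periodic tempered distribution on ℝ^d (i.e. f composed with translation by any k ∈ Λ_E equals f), and let φ be a Schwartz function on ℝ^d. Define V_φf(x,ξ) = (2π)^{-d/2} f(y ↦ conj(φ(y−x)) e^{-i⟨y,ξ⟩}). Then there exist constants C > 0 and N ≥ 0 such that |V_φf(x,ξ)| ≤ C (1+|ξ|)^N for all (x,ξ) ∈ ℝ^d × ℝ^d. -/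
open MeasureTheory Filter
open scoped BigOperators InnerProductSpace Topology

noncomputable section

/-! Translating the window by a lattice vector `τ` only multiplies `W x ξ` by the unimodular
phase `exp(i⟨τ, ξ⟩)`, so by periodicity `|f(W x ξ)|` depends on `x` only modulo the lattice and we
may take `x` in the bounded parallelepiped. A tempered distribution is bounded by finitely many
Schwartz seminorms, and by the Leibniz rule the `(k, n)`-seminorm of
`y ↦ conj φ(y - x) e^{-i⟨y, ξ⟩}` is `O((1 + ‖x‖)^k (1 + ‖ξ‖)^n)`: each derivative falling on
the character costs a factor `‖ξ‖`. -/

open scoped SchwartzMap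

section Leibniz

variable {𝕜 E A : Type*} [NontriviallyNormedField 𝕜] [NormedAddCommGroup E] [NormedSpace 𝕜 E]
  [NormedRing A] [NormedAlgebra 𝕜 A]

theorem norm_iteratedFDeriv_mul_le_of_le {u v : E → A} {n : ℕ} (hu : ContDiff 𝕜 n u)
    (hv : ContDiff 𝕜 n v) {y : E} {c M B : ℝ} (hc : 0 ≤ c)
    (hu_le : ∀ i ≤ n, c * ‖iteratedFDeriv 𝕜 i u y‖ ≤ M)
    (hv_le : ∀ j ≤ n, ‖iteratedFDeriv 𝕜 j v y‖ ≤ B ^ j) :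
    c * ‖iteratedFDeriv 𝕜 n (fun y => u y * v y) y‖ ≤ M * (1 + B) ^ n := by
  have hM : 0 ≤ M := (by positivity : 0 ≤ c * ‖iteratedFDeriv 𝕜 0 u y‖).trans (hu_le 0 n.zero_le)
  calc c * ‖iteratedFDeriv 𝕜 n (fun y => u y * v y) y‖
      ≤ c * ∑ i ∈ Finset.range (n + 1), (n.choose i : ℝ) * ‖iteratedFDeriv 𝕜 i u y‖ *
          ‖iteratedFDeriv 𝕜 (n - i) v y‖ := by
        gcongr
        exact norm_iteratedFDeriv_mul_le hu hv y le_rfl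
    _ = ∑ i ∈ Finset.range (n + 1), (n.choose i : ℝ) * (c * ‖iteratedFDeriv 𝕜 i u y‖) *
          ‖iteratedFDeriv 𝕜 (n - i) v y‖ := by
        rw [Finset.mul_sum]; congr! 1 with i; ring
    _ ≤ ∑ i ∈ Finset.range (n + 1), (n.choose i : ℝ) * M * B ^ (n - i) := by
        gcongr with i hi
        · exact hu_le i (Nat.lt_succ_iff.mp (Finset.mem_range.mp hi))
        · exact hv_le (n - i) (n.sub_le i)
    _ = M * (1 + B) ^ n := by
        rw [add_pow, Finset.mul_sum]; congr! 1 with i; rw [one_pow]; ring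

end Leibniz

theorem pow_norm_le_one_add_norm_mul_one_add_norm_sub {E : Type*} [SeminormedAddCommGroup E]
    (x y : E) (k : ℕ) : ‖y‖ ^ k ≤ (1 + ‖x‖) ^ k * (1 + ‖y - x‖) ^ k := by
  rw [← mul_pow]
  gcongr
  nlinarith [norm_le_norm_add_norm_sub' y x, norm_nonneg x, norm_nonneg (y - x)]

theorem iteratedDeriv_cexp_const_mul_ofReal (c : ℂ) (n : ℕ) :
    iteratedDeriv n (fun t : ℝ => Complex.exp (c * t)) =
      fun t : ℝ => c ^ n * Complex.exp (c * t) := by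
  induction n with
  | zero => simp
  | succ n ih =>
    rw [iteratedDeriv_succ, ih]
    funext t
    have h : HasDerivAt (fun t : ℝ => Complex.exp (c * t)) (Complex.exp (c * t) * c) t := by
      simpa using ((hasDerivAt_id (t : ℂ)).const_mul c).cexp.comp_ofReal
    rw [(h.const_mul (c ^ n)).deriv, pow_succ]
    ring

theorem SchwartzMap.exists_norm_apply_le_sup_seminorm_Iic {𝕜 E F G : Type*}
    [NontriviallyNormedField 𝕜] [NormedAddCommGroup E] [NormedSpace ℝ E]
    [NormedAddCommGroup F] [NormedSpace ℝ F] [NormedSpace 𝕜 F] [SMulCommClass ℝ 𝕜 F]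
    [NormedAddCommGroup G] [NormedSpace 𝕜 G] (f : 𝓢(E, F) →L[𝕜] G) :
    ∃ (m : ℕ × ℕ) (C : ℝ), 0 ≤ C ∧
      ∀ g, ‖f g‖ ≤ C * (Finset.Iic m).sup (schwartzSeminormFamily 𝕜 E F) g := by
  obtain ⟨s, C, -, hC⟩ := Seminorm.bound_of_continuous (schwartz_withSeminorms 𝕜 E F)
    ((normSeminorm 𝕜 G).comp f.toLinearMap) (continuous_norm.comp f.continuous)
  have hs : s ⊆ Finset.Iic (s.sup Prod.fst, s.sup Prod.snd) := fun p hp =>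
    Finset.mem_Iic.2 ⟨Finset.le_sup (f := Prod.fst) hp, Finset.le_sup (f := Prod.snd) hp⟩
  refine ⟨(s.sup Prod.fst, s.sup Prod.snd), C, C.coe_nonneg, fun g => (hC g).trans ?_⟩
  exact mul_le_mul_of_nonneg_left ((Finset.sup_mono (f := schwartzSeminormFamily 𝕜 E F) hs) g)
    C.coe_nonneg

section InnerProductSpace

variable {E : Type*} [NormedAddCommGroup E] [InnerProductSpace ℝ E]

theorem cexp_neg_I_mul_inner_eq_comp (ξ : E) :
    (fun y : E => Complex.exp (-Complex.I * (⟪y, ξ⟫_ℝ : ℂ))) =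
      (fun t : ℝ => Complex.exp (-Complex.I * t)) ∘ innerSL ℝ ξ := by
  funext y
  simp [real_inner_comm]

theorem contDiff_cexp_neg_I_mul_inner (ξ : E) {n : WithTop ℕ∞} :
    ContDiff ℝ n fun y : E => Complex.exp (-Complex.I * (⟪y, ξ⟫_ℝ : ℂ)) := by
  rw [cexp_neg_I_mul_inner_eq_comp]
  exact ((contDiff_const.mul Complex.ofRealCLM.contDiff).cexp).comp (innerSL ℝ ξ).contDiff

theorem norm_iteratedFDeriv_cexp_neg_I_mul_inner_le (ξ : E) (n : ℕ) (y : E) :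
    ‖iteratedFDeriv ℝ n (fun y : E => Complex.exp (-Complex.I * (⟪y, ξ⟫_ℝ : ℂ))) y‖ ≤ ‖ξ‖ ^ n := by
  have hchar : ContDiff ℝ n fun t : ℝ => Complex.exp (-Complex.I * t) :=
    (contDiff_const.mul Complex.ofRealCLM.contDiff).cexp
  rw [cexp_neg_I_mul_inner_eq_comp, (innerSL ℝ ξ).iteratedFDeriv_comp_right hchar y le_rfl]
  refine (ContinuousMultilinearMap.norm_compContinuousLinearMap_le _ _).trans ?_
  rw [norm_iteratedFDeriv_eq_norm_iteratedDeriv, iteratedDeriv_cexp_const_mul_ofReal]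
  simp [Complex.norm_exp, innerSL_apply_norm]

theorem norm_iteratedFDeriv_conj_comp_sub (φ : E → ℂ) (x y : E) (n : ℕ) :
    ‖iteratedFDeriv ℝ n (fun y => (starRingEnd ℂ) (φ (y - x))) y‖ =
      ‖iteratedFDeriv ℝ n φ (y - x)‖ := by
  rw [show (fun y => (starRingEnd ℂ) (φ (y - x))) = Complex.conjLIE ∘ fun y => φ (y - x) from rfl,
    Complex.conjLIE.norm_iteratedFDeriv_comp_left, iteratedFDeriv_comp_sub]

theorem sup_seminorm_Iic_window_le (φ g : 𝓢(E, ℂ)) (x ξ : E)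
    (hg : ∀ y, g y = (starRingEnd ℂ) (φ (y - x)) * Complex.exp (-Complex.I * (⟪y, ξ⟫_ℝ : ℂ)))
    (m : ℕ × ℕ) :
    (Finset.Iic m).sup (schwartzSeminormFamily ℂ E ℂ) g ≤
      (2 * (1 + ‖x‖)) ^ m.1 * (Finset.Iic m).sup (schwartzSeminormFamily ℂ E ℂ) φ *
        (1 + ‖ξ‖) ^ m.2 := by
  set S := (Finset.Iic m).sup (schwartzSeminormFamily ℂ E ℂ) φ
  have hS : 0 ≤ S := apply_nonneg _ φ
  refine Seminorm.finset_sup_apply_le (by positivity) fun p hp => ?_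
  obtain ⟨hk, hn⟩ := Finset.mem_Iic.1 hp
  refine SchwartzMap.seminorm_le_bound ℂ p.1 p.2 g (by positivity) fun y => ?_
  have hu_le : ∀ i ≤ p.2, ‖y‖ ^ p.1 *
      ‖iteratedFDeriv ℝ i (fun y => (starRingEnd ℂ) (φ (y - x))) y‖ ≤
        (1 + ‖x‖) ^ p.1 * (2 ^ m.1 * S) := fun i hi => by
    rw [norm_iteratedFDeriv_conj_comp_sub]
    calc ‖y‖ ^ p.1 * ‖iteratedFDeriv ℝ i φ (y - x)‖
        ≤ (1 + ‖x‖) ^ p.1 * ((1 + ‖y - x‖) ^ p.1 * ‖iteratedFDeriv ℝ i φ (y - x)‖) := by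
          rw [← mul_assoc]
          gcongr
          exact pow_norm_le_one_add_norm_mul_one_add_norm_sub x y p.1
      _ ≤ (1 + ‖x‖) ^ p.1 * (2 ^ m.1 * S) := mul_le_mul_of_nonneg_left
          (SchwartzMap.one_add_le_sup_seminorm_apply hk (hi.trans hn) φ (y - x)) (by positivity)
  have hgfun : ⇑g = fun y => (starRingEnd ℂ) (φ (y - x)) *
      Complex.exp (-Complex.I * (⟪y, ξ⟫_ℝ : ℂ)) := funext hg
  have hconj : ContDiff ℝ p.2 fun y => (starRingEnd ℂ) (φ (y - x)) :=
    Complex.conjCLE.contDiff.comp ((φ.smooth p.2).comp (contDiff_id.sub contDiff_const))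
  calc ‖y‖ ^ p.1 * ‖iteratedFDeriv ℝ p.2 g y‖
      ≤ (1 + ‖x‖) ^ p.1 * (2 ^ m.1 * S) * (1 + ‖ξ‖) ^ p.2 := by
        rw [hgfun]
        exact norm_iteratedFDeriv_mul_le_of_le hconj (contDiff_cexp_neg_I_mul_inner ξ)
          (by positivity) hu_le fun j _ => norm_iteratedFDeriv_cexp_neg_I_mul_inner_le ξ j y
    _ ≤ (1 + ‖x‖) ^ m.1 * (2 ^ m.1 * S) * (1 + ‖ξ‖) ^ m.2 := by
        gcongr <;> simp
    _ = (2 * (1 + ‖x‖)) ^ m.1 * S * (1 + ‖ξ‖) ^ m.2 := by rw [mul_pow]; ring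

theorem norm_apply_window_eq_of_translation_invariant (f : 𝓢(E, ℂ) →L[ℂ] ℂ) (τ : E)
    (hτ : ∀ g g' : 𝓢(E, ℂ), (∀ y, g' y = g (y - τ)) → f g' = f g) (φ : 𝓢(E, ℂ))
    (W : E → E → 𝓢(E, ℂ))
    (hW : ∀ x ξ y, W x ξ y = (starRingEnd ℂ) (φ (y - x)) *
      Complex.exp (-Complex.I * (⟪y, ξ⟫_ℝ : ℂ))) (x ξ : E) :
    ‖f (W x ξ)‖ = ‖f (W (x - τ) ξ)‖ := by
  have htrans : ∀ y, (Complex.exp (Complex.I * (⟪τ, ξ⟫_ℝ : ℂ)) • W x ξ) y =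
      W (x - τ) ξ (y - τ) := fun y => by
    rw [smul_apply, smul_eq_mul, hW, hW, sub_sub_sub_cancel_right, inner_sub_left,
      Complex.ofReal_sub, mul_sub, neg_mul, neg_mul, sub_neg_eq_add, Complex.exp_add]
    ring
  rw [← hτ _ _ htrans, map_smul, smul_eq_mul, norm_mul, Complex.norm_exp_I_mul_ofReal, one_mul]

end InnerProductSpace

theorem exists_norm_sub_latPt_le {d : ℕ} (e : Fin d → Euc d) (he : LinearIndependent ℝ e)
    (x : Euc d) : ∃ k, ‖x - latPt e k‖ ≤ ∑ i, ‖e i‖ := by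
  let b := basisOfLinearIndependentOfCardEqFinrank' e he (by simp)
  refine ⟨fun i => ⌊b.repr x i⌋, ?_⟩
  have hx : x - latPt e (fun i => ⌊b.repr x i⌋) = ∑ i, Int.fract (b.repr x i) • e i := by
    have hsum : ∑ i, b.repr x i • e i = x := by simpa [b] using b.sum_repr x
    calc x - latPt e (fun i => ⌊b.repr x i⌋)
        = ∑ i, b.repr x i • e i - ∑ i, (⌊b.repr x i⌋ : ℝ) • e i := by rw [hsum, latPt]
      _ = ∑ i, Int.fract (b.repr x i) • e i := by
        simp only [← Finset.sum_sub_distrib, ← sub_smul, Int.self_sub_floor]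
  rw [hx]
  refine (norm_sum_le _ _).trans (Finset.sum_le_sum fun i _ => ?_)
  rw [norm_smul, Real.norm_of_nonneg (Int.fract_nonneg _)]
  exact mul_le_of_le_one_left (norm_nonneg _) (Int.fract_lt_one _).le

theorem stft_periodic_tempered_distribution_polynomial_growth_general
    {d : ℕ}
    (e : Fin d → Euc d) (he : LinearIndependent ℝ e)
    (f : SchwartzMap (Euc d) ℂ →L[ℂ] ℂ)
    (hper : ∀ (g g' : SchwartzMap (Euc d) ℂ) (k : Fin d → ℤ),
      (∀ y : Euc d, g' y = g (y - latPt e k)) → f g' = f g)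
    (φ : SchwartzMap (Euc d) ℂ)
    (W : Euc d → Euc d → SchwartzMap (Euc d) ℂ)
    (hW : ∀ x ξ y : Euc d,
      W x ξ y = (starRingEnd ℂ) (φ (y - x)) * Complex.exp (-(Complex.I) * (⟪y, ξ⟫_ℝ : ℂ))) :
    ∃ C N : ℝ, 0 < C ∧ 0 ≤ N ∧ ∀ x ξ : Euc d,
      ‖(((2 * Real.pi) ^ (-(d:ℝ)/2) : ℝ) : ℂ) * f (W x ξ)‖ ≤ C * (1 + ‖ξ‖) ^ N := by
  obtain ⟨m, C, hC, hf⟩ := SchwartzMap.exists_norm_apply_le_sup_seminorm_Iic f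
  set A := (2 * Real.pi) ^ (-(d:ℝ)/2)
  set R := ∑ i, ‖e i‖
  set S := (Finset.Iic m).sup (schwartzSeminormFamily ℂ (Euc d) ℂ) φ
  have hA : 0 < A := by positivity
  have hS : 0 ≤ S := apply_nonneg _ φ
  refine ⟨A * C * (2 * (1 + R)) ^ m.1 * S + 1, m.2, by positivity, by positivity, fun x ξ => ?_⟩
  obtain ⟨k, hk⟩ := exists_norm_sub_latPt_le e he x
  have hsup : (Finset.Iic m).sup (schwartzSeminormFamily ℂ (Euc d) ℂ) (W (x - latPt e k) ξ) ≤
      (2 * (1 + R)) ^ m.1 * S * (1 + ‖ξ‖) ^ m.2 :=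
    (sup_seminorm_Iic_window_le φ _ _ ξ (hW (x - latPt e k) ξ) m).trans (by gcongr)
  calc ‖(A : ℂ) * f (W x ξ)‖ = A * ‖f (W (x - latPt e k) ξ)‖ := by
        rw [norm_mul, Complex.norm_real, Real.norm_of_nonneg hA.le,
          norm_apply_window_eq_of_translation_invariant f _ (hper · · k) φ W hW]
    _ ≤ A * (C * ((2 * (1 + R)) ^ m.1 * S * (1 + ‖ξ‖) ^ m.2)) := by
        gcongr
        exact (hf _).trans (by gcongr)
    _ ≤ (A * C * (2 * (1 + R)) ^ m.1 * S + 1) * (1 + ‖ξ‖) ^ (m.2 : ℝ) := by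
        rw [Real.rpow_natCast]
        nlinarith [pow_nonneg (by positivity : (0 : ℝ) ≤ 1 + ‖ξ‖) m.2]

/-- the short-time Fourier transform of an `E`-periodic tempered distribution with
respect to a Schwartz window has polynomial growth in `ξ`, uniformly in `x`. Here `W x ξ` is the
Schwartz function `y ↦ conj(φ(y−x)) e^{-i⟨y,ξ⟩}`, so that `V_φf(x,ξ) = (2π)^{-d/2} f(W x ξ)`. -/
theorem stft_periodic_tempered_distribution_polynomial_growth
    {d : ℕ} (hd : 1 ≤ d)
    (e : Fin d → Euc d) (he : LinearIndependent ℝ e)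
    (f : SchwartzMap (Euc d) ℂ →L[ℂ] ℂ)
    (hper : ∀ (g g' : SchwartzMap (Euc d) ℂ) (k : Fin d → ℤ),
      (∀ y : Euc d, g' y = g (y - latPt e k)) → f g' = f g)
    (φ : SchwartzMap (Euc d) ℂ)
    (W : Euc d → Euc d → SchwartzMap (Euc d) ℂ)
    (hW : ∀ x ξ y : Euc d,
      W x ξ y = (starRingEnd ℂ) (φ (y - x)) * Complex.exp (-(Complex.I) * (⟪y, ξ⟫_ℝ : ℂ))) :
    ∃ C N : ℝ, 0 < C ∧ 0 ≤ N ∧ ∀ x ξ : Euc d,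
      ‖(((2 * Real.pi) ^ (-(d:ℝ)/2) : ℝ) : ℂ) * f (W x ξ)‖ ≤ C * (1 + ‖ξ‖) ^ N :=
  stft_periodic_tempered_distribution_polynomial_growth_general e he f hper φ W hW

end
end

section
/- Let d ≥ 1, s, t > 0 with s + t ≥ 1, E ⊆ ℝ^d be a non-degenerate parallelepiped with lattice Λ_E, and let φ₀, ψ : ℝ^d → ℂ be continuous functions such that for some C, r₀ > 0: |φ₀(x)| ≤ C e^{-r₀|x|^{1/t}}, |ψ(x)| ≤ C e^{-r₀|x|^{1/t}}, and |V_{conj(φ₀)}ψ(x,η)| ≤ C e^{-r₀(|x|^{1/t}+|η|^{1/s})} for all x, η ∈ ℝ^d. Then the series ψ₀ = Σ_{k∈Λ_E} φ₀(·+k) ψ converges absolutely and uniformly on ℝ^d, and there exists r > 0 such that the tails ψ_N = Σ_{k∈Λ_E, |k|≥N} φ₀(·+k) ψ satisfy ‖ψ_N e^{r|·|^{1/t}}‖_{L^∞} + ‖ψ̂_N e^{r|·|^{1/s}}‖_{L^∞} → 0 as N → ∞. -/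
/-! The quasi-triangle inequality `‖k‖ ^ p ≤ 2 ^ p (‖x + k‖ ^ p + ‖x‖ ^ p)` splits the decay of
`φ₀ (x + k) ψ x` into a factor `exp (-c ‖k‖ ^ p)`, summable over the lattice (it is dominated by
`‖k‖ ^ (-r)` with `r` above the rank), times `exp (-(r₀ / 2) ‖x‖ ^ p)`. This gives the Weierstrass M-test and the
weighted bound on the tails. On the Fourier side the integral commutes with the lattice sum, and the
Fourier transform of `φ₀ (· + k) ψ` is `V_{conj φ₀} ψ (-k, ·)`, whose joint decay bounds the
transformed tails. Both bounds are multiples of tails of a convergent series, hence tend to `0`. -/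

open MeasureTheory Filter
open scoped BigOperators InnerProductSpace Topology

noncomputable section

/-- The tail `ψ_N = Σ_{k ∈ Λ_E, |k| ≥ N} φ₀(·+k) ψ`. -/
def tailSum {d : ℕ} (e : Fin d → Euc d) (φ₀ ψ : Euc d → ℂ) (N : ℕ) (x : Euc d) : ℂ :=
  ∑' j : {j : Fin d → ℤ // (N : ℝ) ≤ ‖latPt e j‖}, φ₀ (x + latPt e j.1) * ψ x

theorem Real.exp_neg_mul_rpow_le {c u p : ℝ} (hc : 0 < c) (hu : 0 < u) (m : ℕ) :
    Real.exp (-c * u ^ p) ≤ m.factorial / c ^ m * u ^ (-(p * m)) := by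
  have hX : 0 < c * u ^ p := by positivity
  calc Real.exp (-c * u ^ p) = (Real.exp (c * u ^ p))⁻¹ := by rw [neg_mul, Real.exp_neg]
    _ ≤ ((c * u ^ p) ^ m / m.factorial)⁻¹ :=
      inv_anti₀ (by positivity) (Real.pow_div_factorial_le_exp _ hX.le m)
    _ = m.factorial / c ^ m * u ^ (-(p * m)) := by
      rw [Real.rpow_neg hu.le, Real.rpow_mul hu.le, Real.rpow_natCast, mul_pow]
      field_simp

theorem ZLattice.summable_exp_neg_mul_norm_rpow {E : Type*} [NormedAddCommGroup E]
    [NormedSpace ℝ E] [FiniteDimensional ℝ E] (L : Submodule ℤ E) [DiscreteTopology L]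
    {c p : ℝ} (hc : 0 < c) (hp : 0 < p) :
    Summable fun z : L => Real.exp (-c * ‖z‖ ^ p) := by
  obtain ⟨m, hm⟩ := exists_nat_gt ((Module.finrank ℤ L + 1) / p)
  have hr : -(p * m) < -(Module.finrank ℤ L : ℝ) := by
    rw [div_lt_iff₀ hp] at hm
    linarith
  refine Summable.of_norm_bounded_eventually
    ((ZLattice.summable_norm_rpow L _ hr).mul_left (m.factorial / c ^ m))
    ((eventually_cofinite_ne 0).mono fun z hz => ?_)
  rw [Real.norm_of_nonneg (Real.exp_pos _).le]
  exact Real.exp_neg_mul_rpow_le hc (norm_pos_iff.2 hz) m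

theorem summable_exp_neg_mul_norm_latPt_rpow {d : ℕ} {e : Fin d → Euc d}
    (he : LinearIndependent ℝ e) {c p : ℝ} (hc : 0 < c) (hp : 0 < p) :
    Summable fun j : Fin d → ℤ => Real.exp (-c * ‖latPt e j‖ ^ p) := by
  let b := basisOfLinearIndependentOfCardEqFinrank' e he (by simp)
  let bZ := b.restrictScalars ℤ
  have hlat : ∀ j, latPt e j = (bZ.equivFun.symm j : Euc d) := by
    intro j
    rw [Module.Basis.equivFun_symm_apply, Submodule.coe_sum]
    refine Finset.sum_congr rfl fun i _ => ?_
    rw [Submodule.coe_smul, Module.Basis.restrictScalars_apply,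
      coe_basisOfLinearIndependentOfCardEqFinrank', Int.cast_smul_eq_zsmul]
  have hL := ZLattice.summable_exp_neg_mul_norm_rpow (Submodule.span ℤ (Set.range b)) hc hp
  simp_rw [hlat]
  exact hL.comp_injective bZ.equivFun.symm.injective

theorem integrable_exp_neg_mul_norm_rpow {E : Type*} [NormedAddCommGroup E] [NormedSpace ℝ E]
    [FiniteDimensional ℝ E] [MeasurableSpace E] [BorelSpace E] (μ : Measure E)
    [μ.IsAddHaarMeasure] {b p : ℝ} (hb : 0 < b) (hp : 0 < p) :
    Integrable (fun x : E => Real.exp (-b * ‖x‖ ^ p)) μ := by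
  cases subsingleton_or_nontrivial E
  · exact .of_finite
  refine (integrable_fun_norm_addHaar μ (f := fun y => Real.exp (-b * y ^ p))).2 ?_
  have h := integrableOn_rpow_mul_exp_neg_mul_rpow
    (s := (Module.finrank ℝ E - 1 : ℕ))
    (neg_one_lt_zero.trans_le (Nat.cast_nonneg _)) hp hb
  refine h.congr_fun (fun y _ => ?_) measurableSet_Ioi
  simp [Real.rpow_natCast]

theorem Real.add_rpow_le_two_rpow_mul_rpow_add_rpow {a b p : ℝ} (ha : 0 ≤ a) (hb : 0 ≤ b)
    (hp : 0 ≤ p) : (a + b) ^ p ≤ 2 ^ p * (a ^ p + b ^ p) := calc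
  (a + b) ^ p ≤ (2 * max a b) ^ p := by rw [two_mul]; gcongr <;> simp
  _ = 2 ^ p * (max a b) ^ p := Real.mul_rpow zero_le_two (le_max_of_le_left ha)
  _ = 2 ^ p * max (a ^ p) (b ^ p) := by rw [Real.rpow_max ha hb hp]
  _ ≤ 2 ^ p * (a ^ p + b ^ p) := by
    gcongr; exact max_le_add_of_nonneg (by positivity) (by positivity)

theorem norm_translate_mul_le {E : Type*} [SeminormedAddCommGroup E] {φ ψ : E → ℂ}
    {C r p : ℝ} (hr : 0 ≤ r) (hp : 0 ≤ p)
    (hφ : ∀ x, ‖φ x‖ ≤ C * Real.exp (-r * ‖x‖ ^ p))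
    (hψ : ∀ x, ‖ψ x‖ ≤ C * Real.exp (-r * ‖x‖ ^ p)) (x k : E) :
    ‖φ (x + k) * ψ x‖ ≤
      C * C * Real.exp (-(r / (2 * 2 ^ p)) * ‖k‖ ^ p) * Real.exp (-(r / 2) * ‖x‖ ^ p) := by
  have hk : ‖k‖ ^ p ≤ 2 ^ p * (‖x + k‖ ^ p + ‖x‖ ^ p) := by
    calc ‖k‖ ^ p ≤ (‖x + k‖ + ‖x‖) ^ p := by
          gcongr
          simpa using norm_sub_le (x + k) x
      _ ≤ _ := Real.add_rpow_le_two_rpow_mul_rpow_add_rpow (norm_nonneg _) (norm_nonneg _) hp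
  have hexp : -r * ‖x + k‖ ^ p + -r * ‖x‖ ^ p ≤
      -(r / (2 * 2 ^ p)) * ‖k‖ ^ p + -(r / 2) * ‖x‖ ^ p := by
    have hk' : r / (2 * 2 ^ p) * ‖k‖ ^ p ≤ r / 2 * (‖x + k‖ ^ p + ‖x‖ ^ p) := calc
      _ ≤ r / (2 * 2 ^ p) * (2 ^ p * (‖x + k‖ ^ p + ‖x‖ ^ p)) := by gcongr
      _ = r / 2 * (‖x + k‖ ^ p + ‖x‖ ^ p) := by field_simp
    nlinarith [mul_nonneg hr (Real.rpow_nonneg (norm_nonneg (x + k)) p)]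
  calc ‖φ (x + k) * ψ x‖
      ≤ C * Real.exp (-r * ‖x + k‖ ^ p) * (C * Real.exp (-r * ‖x‖ ^ p)) := by
        rw [norm_mul]
        exact mul_le_mul (hφ _) (hψ x) (norm_nonneg _) ((norm_nonneg _).trans (hφ _))
    _ = C * C * Real.exp (-r * ‖x + k‖ ^ p + -r * ‖x‖ ^ p) := by rw [Real.exp_add]; ring
    _ ≤ _ := by
        rw [mul_assoc _ (Real.exp _), ← Real.exp_add]
        gcongr
        exact mul_self_nonneg C

theorem tendsto_tsum_subtype_le_atTop_zero {α : Type*} {g : α → ℝ} (hg : Summable g)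
    (f : α → ℝ) :
    Tendsto (fun N : ℕ => ∑' j : {j // (N : ℝ) ≤ f j}, g j) atTop (𝓝 0) := by
  have h : ∀ N : ℕ, ∑' j : {j // (N : ℝ) ≤ f j}, g j = ∑' j, {j | (N : ℝ) ≤ f j}.indicator g j :=
    fun N => tsum_subtype {j | (N : ℝ) ≤ f j} g
  simp_rw [h]
  rw [← tsum_zero]
  refine tendsto_tsum_of_dominated_convergence hg.abs (fun j => ?_)
    (Eventually.of_forall fun N j => ?_)
  · refine tendsto_const_nhds.congr' ?_
    filter_upwards [eventually_gt_atTop ⌈f j⌉₊] with N hN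
    rw [Set.indicator_of_notMem]
    simpa using Nat.lt_of_ceil_lt hN
  · exact (norm_indicator_le_norm_self _ _).trans_eq (Real.norm_eq_abs _)

theorem norm_tsum_mul_exp_le_of_le {α E : Type*} [SeminormedAddCommGroup E] {f : α → E}
    {G : α → ℝ} (hG : Summable G) {a u : ℝ} (h : ∀ j, ‖f j‖ ≤ G j * Real.exp (-a * u)) :
    ‖∑' j, f j‖ * Real.exp (a * u) ≤ ∑' j, G j := by
  rw [← le_div_iff₀ (Real.exp_pos _), div_eq_mul_inv, ← Real.exp_neg, ← neg_mul]
  exact tsum_of_norm_bounded (hG.hasSum.mul_right _) h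

theorem norm_cexp_neg_I_mul_ofReal (r : ℝ) : ‖Complex.exp (-Complex.I * r)‖ = 1 := by
  rw [neg_mul, mul_comm, ← neg_mul, ← Complex.ofReal_neg, Complex.norm_exp_ofReal_mul_I]

theorem FT_tsum_of_norm_le {ι : Type*} [Countable ι] {d : ℕ} {F : ι → Euc d → ℂ}
    {G : ι → ℝ} {b p : ℝ} (hb : 0 < b) (hp : 0 < p) (hG : Summable G)
    (hFc : ∀ j, Continuous (F j)) (hF : ∀ j x, ‖F j x‖ ≤ G j * Real.exp (-b * ‖x‖ ^ p))
    (ξ : Euc d) :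
    FT (fun x => ∑' j, F j x) ξ = ∑' j, FT (F j) ξ := by
  set χ : Euc d → ℂ := fun x => Complex.exp (-Complex.I * (⟪x, ξ⟫_ℝ : ℂ))
  have hχ : Continuous χ := by fun_prop
  have hFχ : ∀ j x, ‖F j x * χ x‖ = ‖F j x‖ := fun j x => by
    rw [norm_mul, norm_cexp_neg_I_mul_ofReal, mul_one]
  have hexp := integrable_exp_neg_mul_norm_rpow (volume : Measure (Euc d)) hb hp
  have hint : ∀ j, Integrable fun x => F j x * χ x := fun j =>
    (hexp.const_mul (G j)).mono' ((hFc j).mul hχ).aestronglyMeasurable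
      (ae_of_all _ fun x => (hFχ j x).trans_le (hF j x))
  have hsum : Summable fun j => ∫ x, ‖F j x * χ x‖ := by
    refine (hG.mul_right (∫ x : Euc d, Real.exp (-b * ‖x‖ ^ p))).of_nonneg_of_le
      (fun j => integral_nonneg fun x => norm_nonneg _) fun j => ?_
    rw [← integral_const_mul]
    exact integral_mono (hint j).norm (hexp.const_mul _) fun x => (hFχ j x).trans_le (hF j x)
  simp only [FT, ← tsum_mul_right]
  rw [← integral_tsum_of_summable_integral_norm hint hsum, tsum_mul_left]

theorem FT_translate_mul {d : ℕ} (φ ψ : Euc d → ℂ) (k ξ : Euc d) :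
    FT (fun x => φ (x + k) * ψ x) ξ = STFT (fun y => starRingEnd ℂ (φ y)) ψ (-k) ξ := by
  simp only [FT, STFT, sub_neg_eq_add, Complex.conj_conj]
  congr 2
  funext x
  ring

theorem norm_STFT_neg_le {d : ℕ} {φ ψ : Euc d → ℂ} {C r p q : ℝ} (hC : 0 ≤ C) (hr : 0 ≤ r)
    (hp : 0 ≤ p) (hV : ∀ x η, ‖STFT φ ψ x η‖ ≤ C * Real.exp (-r * (‖x‖ ^ p + ‖η‖ ^ q)))
    (k ξ : Euc d) :
    ‖STFT φ ψ (-k) ξ‖ ≤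
      C * Real.exp (-(r / (2 * 2 ^ p)) * ‖k‖ ^ p) * Real.exp (-(r / 2) * ‖ξ‖ ^ q) := by
  have hc : r / (2 * 2 ^ p) ≤ r := div_le_self hr
    (one_le_two.trans (le_mul_of_one_le_right zero_le_two (Real.one_le_rpow one_le_two hp)))
  refine (hV _ ξ).trans ?_
  rw [mul_assoc, ← Real.exp_add, norm_neg]
  gcongr
  nlinarith [Real.rpow_nonneg (norm_nonneg k) p, Real.rpow_nonneg (norm_nonneg ξ) q]

theorem FT_tailSum {d : ℕ} (e : Fin d → Euc d) {φ₀ ψ : Euc d → ℂ} (hφ₀c : Continuous φ₀)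
    (hψc : Continuous ψ) {G : (Fin d → ℤ) → ℝ} {b p : ℝ} (hb : 0 < b) (hp : 0 < p)
    (hG : Summable G)
    (hF : ∀ j x, ‖φ₀ (x + latPt e j) * ψ x‖ ≤ G j * Real.exp (-b * ‖x‖ ^ p)) (N : ℕ)
    (ξ : Euc d) :
    FT (tailSum e φ₀ ψ N) ξ = ∑' j : {j // (N : ℝ) ≤ ‖latPt e j‖},
      STFT (fun y => starRingEnd ℂ (φ₀ y)) ψ (-latPt e j) ξ :=
  (FT_tsum_of_norm_le (F := fun (j : {j // (N : ℝ) ≤ ‖latPt e j‖}) x =>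
    φ₀ (x + latPt e j) * ψ x) hb hp (hG.subtype _) (fun _ => by fun_prop)
    (fun j => hF j.1) ξ).trans (tsum_congr fun _ => FT_translate_mul _ _ _ _)

theorem periodization_tails_tendsto_zero_general
    {d : ℕ} (s t : ℝ) (ht : 0 < t)
    (e : Fin d → Euc d) (he : LinearIndependent ℝ e)
    (φ₀ ψ : Euc d → ℂ) (hφ₀c : Continuous φ₀) (hψc : Continuous ψ)
    (C r₀ : ℝ) (hC : 0 < C) (hr₀ : 0 < r₀)
    (hφ₀ : ∀ x : Euc d, ‖φ₀ x‖ ≤ C * Real.exp (-r₀ * ‖x‖ ^ (1/t)))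
    (hψ : ∀ x : Euc d, ‖ψ x‖ ≤ C * Real.exp (-r₀ * ‖x‖ ^ (1/t)))
    (hV : ∀ x η : Euc d,
      ‖STFT (fun y => (starRingEnd ℂ) (φ₀ y)) ψ x η‖ ≤
        C * Real.exp (-r₀ * (‖x‖ ^ (1/t) + ‖η‖ ^ (1/s)))) :
    (∀ x : Euc d, Summable fun j : Fin d → ℤ => ‖φ₀ (x + latPt e j) * ψ x‖) ∧
    TendstoUniformly
      (fun (F : Finset (Fin d → ℤ)) (x : Euc d) => ∑ j ∈ F, φ₀ (x + latPt e j) * ψ x)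
      (fun x => ∑' j : Fin d → ℤ, φ₀ (x + latPt e j) * ψ x) atTop ∧
    ∃ r : ℝ, 0 < r ∧ ∀ ε : ℝ, 0 < ε → ∃ N₀ : ℕ, ∀ N : ℕ, N₀ ≤ N →
      (∀ x : Euc d, ‖tailSum e φ₀ ψ N x‖ * Real.exp (r * ‖x‖ ^ (1/t)) ≤ ε) ∧
      (∀ ξ : Euc d, ‖FT (tailSum e φ₀ ψ N) ξ‖ * Real.exp (r * ‖ξ‖ ^ (1/s)) ≤ ε) := by
  have hp : 0 < 1 / t := by positivity
  set g : (Fin d → ℤ) → ℝ :=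
    fun j => Real.exp (-(r₀ / (2 * 2 ^ (1 / t))) * ‖latPt e j‖ ^ (1 / t))
  have hg : Summable g := summable_exp_neg_mul_norm_latPt_rpow he (by positivity) hp
  have hF : ∀ j x, ‖φ₀ (x + latPt e j) * ψ x‖ ≤
      C * C * g j * Real.exp (-(r₀ / 2) * ‖x‖ ^ (1 / t)) := fun j x =>
    norm_translate_mul_le hr₀.le hp.le hφ₀ hψ x _
  have hF' : ∀ j x, ‖φ₀ (x + latPt e j) * ψ x‖ ≤ C * C * g j := fun j x =>
    (hF j x).trans (mul_le_of_le_one_right (by positivity) (Real.exp_le_one_iff.2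
      (mul_nonpos_of_nonpos_of_nonneg (by linarith) (by positivity))))
  refine ⟨fun x => (hg.mul_left _).of_nonneg_of_le (fun _ => norm_nonneg _) (hF' · x),
    tendstoUniformly_tsum (hg.mul_left _) hF', r₀ / 2, by positivity, fun ε hε => ?_⟩
  have hT (G : (Fin d → ℤ) → ℝ) (hG : Summable G) :=
    (tendsto_tsum_subtype_le_atTop_zero hG (‖latPt e ·‖)).eventually_le_const hε
  obtain ⟨N₀, hN₀⟩ :=
    eventually_atTop.1 ((hT _ (hg.mul_left (C * C))).and (hT _ (hg.mul_left C)))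
  refine ⟨N₀, fun N hN => ⟨fun x => ?_, fun ξ => ?_⟩⟩
  · exact (norm_tsum_mul_exp_le_of_le ((hg.mul_left (C * C)).subtype _)
      fun j => hF j.1 x).trans (hN₀ N hN).1
  · rw [FT_tailSum e hφ₀c hψc (by positivity) hp (hg.mul_left (C * C)) hF]
    exact (norm_tsum_mul_exp_le_of_le ((hg.mul_left C).subtype _)
      fun j => norm_STFT_neg_le hC.le hr₀.le hp.le hV _ ξ).trans (hN₀ N hN).2

/-- for Gelfand–Shilov-type `φ₀, ψ`, the periodization series
`ψ₀ = Σ_{k ∈ Λ_E} φ₀(·+k) ψ` converges absolutely and uniformly, and the tails and their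
Fourier transforms tend to `0` in the exponentially weighted sup-norms. -/
theorem periodization_tails_tendsto_zero
    {d : ℕ} (hd : 1 ≤ d) (s t : ℝ) (hs : 0 < s) (ht : 0 < t) (hst : 1 ≤ s + t)
    (e : Fin d → Euc d) (he : LinearIndependent ℝ e)
    (φ₀ ψ : Euc d → ℂ) (hφ₀c : Continuous φ₀) (hψc : Continuous ψ)
    (C r₀ : ℝ) (hC : 0 < C) (hr₀ : 0 < r₀)
    (hφ₀ : ∀ x : Euc d, ‖φ₀ x‖ ≤ C * Real.exp (-r₀ * ‖x‖ ^ (1/t)))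
    (hψ : ∀ x : Euc d, ‖ψ x‖ ≤ C * Real.exp (-r₀ * ‖x‖ ^ (1/t)))
    (hV : ∀ x η : Euc d,
      ‖STFT (fun y => (starRingEnd ℂ) (φ₀ y)) ψ x η‖ ≤
        C * Real.exp (-r₀ * (‖x‖ ^ (1/t) + ‖η‖ ^ (1/s)))) :
    (∀ x : Euc d, Summable fun j : Fin d → ℤ => ‖φ₀ (x + latPt e j) * ψ x‖) ∧
    TendstoUniformly
      (fun (F : Finset (Fin d → ℤ)) (x : Euc d) => ∑ j ∈ F, φ₀ (x + latPt e j) * ψ x)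
      (fun x => ∑' j : Fin d → ℤ, φ₀ (x + latPt e j) * ψ x) atTop ∧
    ∃ r : ℝ, 0 < r ∧ ∀ ε : ℝ, 0 < ε → ∃ N₀ : ℕ, ∀ N : ℕ, N₀ ≤ N →
      (∀ x : Euc d, ‖tailSum e φ₀ ψ N x‖ * Real.exp (r * ‖x‖ ^ (1/t)) ≤ ε) ∧
      (∀ ξ : Euc d, ‖FT (tailSum e φ₀ ψ N) ξ‖ * Real.exp (r * ‖ξ‖ ^ (1/s)) ≤ ε) :=
  periodization_tails_tendsto_zero_general s t ht e he φ₀ ψ hφ₀c hψc C r₀ hC hr₀ hφ₀ hψ hV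

end
end

section
/- Let d ≥ 1, E ⊆ ℝ^d be a non-degenerate parallelepiped with lattice Λ_E, f be a tempered distribution on ℝ^d, and let φ₀, ψ be Schwartz functions on ℝ^d. Then sup_{x∈ℝ^d} Σ_{k∈Λ_E} |f( y ↦ φ₀(y − x + k) ψ(y) )| < ∞. -/
/-!
Continuity of `f` bounds `‖f Φ‖` by finitely many Schwartz seminorms of `Φ`. For
`Φ y = φ₀ (y + c) * ψ y`, the Leibniz rule and Peetre's inequality
`1 + ‖c‖ ≤ (1 + ‖y + c‖) * (1 + ‖y‖)` make each of these seminorms `O((1 + ‖c‖)⁻ᴺ)` for every `N`.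
Taking `c = k - x` with `k` in the lattice and `N = d + 1`, the sum is dominated by
`∑ₖ (1 + ‖k - x‖)⁻ᴺ`; moving `x` into the fundamental parallelepiped by a lattice translation
costs only a constant factor, and `∑ₖ (1 + ‖k‖)⁻ᴺ` converges because `N` exceeds the rank.
-/

open MeasureTheory Filter
open scoped BigOperators InnerProductSpace Topology

noncomputable section

open SchwartzMap

theorem one_add_norm_add_le_mul {E : Type*} [SeminormedAddCommGroup E] (u v : E) :
    1 + ‖u + v‖ ≤ (1 + ‖u‖) * (1 + ‖v‖) := by
  nlinarith [norm_add_le u v, norm_nonneg u, norm_nonneg v]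

section Decay

variable {E : Type*} [NormedAddCommGroup E] [NormedSpace ℝ E]

theorem SchwartzMap.exists_seminorm_le_of_eq_comp_add_mul (φ ψ : 𝓢(E, ℂ)) (k n N : ℕ) :
    ∃ D, 0 ≤ D ∧ ∀ (c : E) (Φ : 𝓢(E, ℂ)), (∀ y, Φ y = φ (y + c) * ψ y) →
      SchwartzMap.seminorm ℂ k n Φ ≤ D * ((1 + ‖c‖) ^ N)⁻¹ := by
  set Pφ := 2 ^ N * (Finset.Iic (N, n)).sup (schwartzSeminormFamily ℝ E ℂ) φ
  set Pψ := 2 ^ (k + N) * (Finset.Iic (k + N, n)).sup (schwartzSeminormFamily ℝ E ℂ) ψ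
  refine ⟨2 ^ n * Pφ * Pψ, by positivity, fun c Φ hΦ => ?_⟩
  rw [← div_eq_mul_inv]
  refine seminorm_le_bound ℂ k n Φ (by positivity) fun y => ?_
  rw [le_div_iff₀ (by positivity)]
  have hleibniz : ‖iteratedFDeriv ℝ n Φ y‖ ≤ ∑ i ∈ Finset.range (n + 1),
      (n.choose i : ℝ) * ‖iteratedFDeriv ℝ i φ (y + c)‖ * ‖iteratedFDeriv ℝ (n - i) ψ y‖ := by
    have hφc : ContDiff ℝ (⊤ : ℕ∞) fun z => φ (z + c) :=
      (φ.smooth ⊤).comp (contDiff_id.add contDiff_const)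
    rw [funext hΦ]
    simpa only [iteratedFDeriv_comp_add_right] using
      norm_iteratedFDeriv_mul_le hφc (ψ.smooth ⊤) y (n := n) (mod_cast le_top)
  have hpeetre : 1 + ‖c‖ ≤ (1 + ‖y + c‖) * (1 + ‖y‖) := by
    simpa using one_add_norm_add_le_mul (y + c) (-y)
  calc ‖y‖ ^ k * ‖iteratedFDeriv ℝ n Φ y‖ * (1 + ‖c‖) ^ N
      ≤ (1 + ‖y‖) ^ k * (∑ i ∈ Finset.range (n + 1), (n.choose i : ℝ) *
          ‖iteratedFDeriv ℝ i φ (y + c)‖ * ‖iteratedFDeriv ℝ (n - i) ψ y‖) *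
          ((1 + ‖y + c‖) * (1 + ‖y‖)) ^ N := by
        gcongr
        linarith
    _ = ∑ i ∈ Finset.range (n + 1), (n.choose i : ℝ) *
          ((1 + ‖y + c‖) ^ N * ‖iteratedFDeriv ℝ i φ (y + c)‖) *
          ((1 + ‖y‖) ^ (k + N) * ‖iteratedFDeriv ℝ (n - i) ψ y‖) := by
        rw [Finset.mul_sum, Finset.sum_mul]
        refine Finset.sum_congr rfl fun i _ => ?_
        rw [mul_pow, pow_add]
        ring
    _ ≤ ∑ i ∈ Finset.range (n + 1), (n.choose i : ℝ) * Pφ * Pψ := by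
        gcongr with i hi
        · exact one_add_le_sup_seminorm_apply (m := (N, n)) le_rfl
            (Nat.lt_succ_iff.mp (Finset.mem_range.mp hi)) φ (y + c)
        · exact one_add_le_sup_seminorm_apply (m := (k + N, n)) le_rfl (Nat.sub_le n i) ψ y
    _ = 2 ^ n * Pφ * Pψ := by
        rw [← Finset.sum_mul, ← Finset.sum_mul, ← Nat.cast_sum, Nat.sum_range_choose]
        norm_num

theorem exists_norm_apply_le_of_eq_comp_add_mul (f : 𝓢(E, ℂ) →L[ℂ] ℂ) (φ ψ : 𝓢(E, ℂ))
    (N : ℕ) : ∃ K, 0 ≤ K ∧ ∀ (c : E) (Φ : 𝓢(E, ℂ)), (∀ y, Φ y = φ (y + c) * ψ y) →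
      ‖f Φ‖ ≤ K * ((1 + ‖c‖) ^ N)⁻¹ := by
  obtain ⟨s, C, -, hC⟩ := Seminorm.bound_of_continuous (schwartz_withSeminorms ℂ E ℂ)
    ((normSeminorm ℂ ℂ).comp f.toLinearMap) f.continuous.norm
  choose D hD0 hD using fun kn : ℕ × ℕ =>
    SchwartzMap.exists_seminorm_le_of_eq_comp_add_mul φ ψ kn.1 kn.2 N
  have hD0s : 0 ≤ ∑ kn ∈ s, D kn := Finset.sum_nonneg fun kn _ => hD0 kn
  refine ⟨C * ∑ kn ∈ s, D kn, by positivity, fun c Φ hΦ => ?_⟩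
  have hsup : s.sup (schwartzSeminormFamily ℂ E ℂ) Φ ≤ (∑ kn ∈ s, D kn) * ((1 + ‖c‖) ^ N)⁻¹ :=
    Seminorm.finset_sup_apply_le (by positivity) fun kn hkn =>
      (hD kn c Φ hΦ).trans (by gcongr; exact Finset.single_le_sum (fun i _ => hD0 i) hkn)
  calc ‖f Φ‖ ≤ C * s.sup (schwartzSeminormFamily ℂ E ℂ) Φ := hC Φ
    _ ≤ _ := by rw [mul_assoc]; gcongr

end Decay

namespace ZSpan

open Submodule Module

variable {E ι : Type*} [NormedAddCommGroup E] [NormedSpace ℝ E] [Fintype ι] (b : Basis ι ℝ E)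
  {N : ℕ}

theorem summable_one_add_norm_pow_inv (hN : Fintype.card ι < N) :
    Summable fun z : span ℤ (Set.range b) => ((1 + ‖(z : E)‖) ^ N)⁻¹ := by
  have := b.finiteDimensional_of_finite
  have hrank : finrank ℤ (span ℤ (Set.range b)) < N := by
    rwa [finrank_eq_card_basis (b.restrictScalars ℤ)]
  refine Summable.of_norm_bounded_eventually (ZLattice.summable_norm_pow_inv _ N hrank) ?_
  filter_upwards [eventually_cofinite_ne 0] with z hz
  rw [Real.norm_of_nonneg (by positivity), ← inv_pow]
  exact pow_le_pow_left₀ (by positivity) (inv_anti₀ (norm_pos_iff.mpr hz)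
    (le_add_of_nonneg_left zero_le_one)) N

theorem one_add_norm_sub_pow_inv_le (x z : E) :
    ((1 + ‖z - x‖) ^ N)⁻¹ ≤
      (1 + ∑ i, ‖b i‖) ^ N * ((1 + ‖z - (floor b x : E)‖) ^ N)⁻¹ := by
  have h : 1 + ‖z - (floor b x : E)‖ ≤ (1 + ‖z - x‖) * (1 + ∑ i, ‖b i‖) := by
    calc 1 + ‖z - (floor b x : E)‖ = 1 + ‖(z - x) + fract b x‖ := by
          rw [fract_apply]; abel_nf
      _ ≤ (1 + ‖z - x‖) * (1 + ‖fract b x‖) := one_add_norm_add_le_mul _ _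
      _ ≤ (1 + ‖z - x‖) * (1 + ∑ i, ‖b i‖) := by gcongr; exact norm_fract_le b x
  rw [← div_eq_mul_inv, le_div_iff₀ (by positivity), inv_mul_le_iff₀ (by positivity), ← mul_pow]
  gcongr

theorem exists_tsum_one_add_norm_sub_pow_inv_le (hN : Fintype.card ι < N) :
    ∃ B, ∀ x : E, Summable (fun z : span ℤ (Set.range b) => ((1 + ‖(z : E) - x‖) ^ N)⁻¹) ∧
      ∑' z : span ℤ (Set.range b), ((1 + ‖(z : E) - x‖) ^ N)⁻¹ ≤ B := by
  set g : E → ℝ := fun v => ((1 + ‖v‖) ^ N)⁻¹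
  refine ⟨(1 + ∑ i, ‖b i‖) ^ N * ∑' z : span ℤ (Set.range b), g z, fun x => ?_⟩
  set T := Equiv.subRight (floor b x)
  have hg : Summable fun z : span ℤ (Set.range b) => g z := summable_one_add_norm_pow_inv b hN
  have hgT : Summable fun z => (1 + ∑ i, ‖b i‖) ^ N * g (T z) :=
    (T.summable_iff.mpr hg).mul_left _
  have hle : ∀ z : span ℤ (Set.range b), g (z - x) ≤ (1 + ∑ i, ‖b i‖) ^ N * g (T z) :=
    fun z => one_add_norm_sub_pow_inv_le b x z
  have hsum := hgT.of_nonneg_of_le (fun z => by positivity) hle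
  refine ⟨hsum, ?_⟩
  calc ∑' z : span ℤ (Set.range b), g (z - x)
      ≤ ∑' z, (1 + ∑ i, ‖b i‖) ^ N * g (T z) := hsum.tsum_le_tsum hle hgT
    _ = _ := by rw [tsum_mul_left, T.tsum_eq (fun z => g z)]

end ZSpan

theorem latPt_eq_coe_equivFun_symm {d : ℕ} (b : Module.Basis (Fin d) ℝ (Euc d))
    (j : Fin d → ℤ) : latPt b j = ((b.restrictScalars ℤ).equivFun.symm j : Euc d) := by
  simp [latPt, Module.Basis.equivFun_symm_apply, Int.cast_smul_eq_zsmul]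

theorem exists_tsum_one_add_norm_latPt_sub_pow_inv_le {d N : ℕ} {e : Fin d → Euc d}
    (he : LinearIndependent ℝ e) (hN : d < N) :
    ∃ B, ∀ x : Euc d, Summable (fun j => ((1 + ‖latPt e j - x‖) ^ N)⁻¹) ∧
      ∑' j, ((1 + ‖latPt e j - x‖) ^ N)⁻¹ ≤ B := by
  obtain ⟨b, rfl⟩ : ∃ b : Module.Basis (Fin d) ℝ (Euc d), ⇑b = e :=
    ⟨_, coe_basisOfLinearIndependentOfCardEqFinrank' e he (by simp)⟩
  obtain ⟨B, hB⟩ := ZSpan.exists_tsum_one_add_norm_sub_pow_inv_le b (by simpa using hN)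
  refine ⟨B, fun x => ?_⟩
  set J := (b.restrictScalars ℤ).equivFun.symm.toEquiv
  set g := fun z : Submodule.span ℤ (Set.range b) => ((1 + ‖(z : Euc d) - x‖) ^ N)⁻¹
  have hg : (fun j => ((1 + ‖latPt b j - x‖) ^ N)⁻¹) = g ∘ J := by
    ext j
    simp only [g, Function.comp_apply, latPt_eq_coe_equivFun_symm]
    rfl
  rw [hg]
  exact ⟨J.summable_iff.mpr (hB x).1, (J.tsum_eq g).trans_le (hB x).2⟩

theorem tempered_distribution_periodization_sum_bounded_general
    {d : ℕ}
    (e : Fin d → Euc d) (he : LinearIndependent ℝ e)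
    (f : SchwartzMap (Euc d) ℂ →L[ℂ] ℂ)
    (φ₀ ψ : SchwartzMap (Euc d) ℂ)
    (W : Euc d → (Fin d → ℤ) → SchwartzMap (Euc d) ℂ)
    (hW : ∀ (x : Euc d) (j : Fin d → ℤ) (y : Euc d),
      W x j y = φ₀ (y - x + latPt e j) * ψ y) :
    ∃ B : ℝ, ∀ x : Euc d,
      Summable (fun j : Fin d → ℤ => ‖f (W x j)‖) ∧
      ∑' j : Fin d → ℤ, ‖f (W x j)‖ ≤ B := by
  obtain ⟨K, hK0, hK⟩ := exists_norm_apply_le_of_eq_comp_add_mul f φ₀ ψ (d + 1)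
  obtain ⟨B, hB⟩ := exists_tsum_one_add_norm_latPt_sub_pow_inv_le he (lt_add_one d)
  refine ⟨K * B, fun x => ?_⟩
  obtain ⟨hsum, hle⟩ := hB x
  have hbound : ∀ j, ‖f (W x j)‖ ≤ K * ((1 + ‖latPt e j - x‖) ^ (d + 1))⁻¹ := fun j =>
    hK _ _ fun y => by rw [hW]; congr 2; abel
  have hsum' := hsum.mul_left K
  have hsummable := hsum'.of_nonneg_of_le (fun j => norm_nonneg _) hbound
  refine ⟨hsummable, ?_⟩
  calc ∑' j, ‖f (W x j)‖ ≤ ∑' j, K * ((1 + ‖latPt e j - x‖) ^ (d + 1))⁻¹ :=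
        hsummable.tsum_le_tsum hbound hsum'
    _ ≤ K * B := by rw [tsum_mul_left]; gcongr

/-- for a tempered distribution `f` and Schwartz functions `φ₀, ψ`, the sum
`Σ_{k ∈ Λ_E} |f(y ↦ φ₀(y − x + k) ψ(y))|` is finite, uniformly in `x`. Here `W x j` is the
Schwartz function `y ↦ φ₀(y − x + k_j) ψ(y)` where `k_j ∈ Λ_E` corresponds to `j : ℤ^d`. -/
theorem tempered_distribution_periodization_sum_bounded
    {d : ℕ} (hd : 1 ≤ d)
    (e : Fin d → Euc d) (he : LinearIndependent ℝ e)
    (f : SchwartzMap (Euc d) ℂ →L[ℂ] ℂ)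
    (φ₀ ψ : SchwartzMap (Euc d) ℂ)
    (W : Euc d → (Fin d → ℤ) → SchwartzMap (Euc d) ℂ)
    (hW : ∀ (x : Euc d) (j : Fin d → ℤ) (y : Euc d),
      W x j y = φ₀ (y - x + latPt e j) * ψ y) :
    ∃ B : ℝ, ∀ x : Euc d,
      Summable (fun j : Fin d → ℤ => ‖f (W x j)‖) ∧
      ∑' j : Fin d → ℤ, ‖f (W x j)‖ ≤ B :=
  tempered_distribution_periodization_sum_bounded_general e he f φ₀ ψ W hW

end
end

section
/- Let d ≥ 1, q ∈ (0,∞), E ⊆ ℝ^d be a non-degenerate parallelepiped, ω : ℝ^d → (0,∞) satisfy ω(ξ+η) ≤ C₀ e^{R|η|} ω(ξ) for some C₀, R > 0 and all ξ, η ∈ ℝ^d, and let φ : ℝ^d → ℂ be a nonzero continuous function such that for every r > 0 there is C_r > 0 with |φ(x)| ≤ C_r e^{-r|x|} and |φ̂(ξ)| ≤ C_r e^{-r|ξ|} for all x, ξ. Then there exists a constant C > 0 such that: for every a : Λ'_E → ℂ with Σ_{α∈Λ'_E} (|a(α)| ω(α))^q < ∞, the series F(x,ξ) = Σ_{α∈Λ'_E}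 a(α) conj(φ̂(α−ξ)) e^{i⟨x,α−ξ⟩} converges absolutely for every (x,ξ) ∈ ℝ^d × ℝ^d and ∫_{ℝ^d} ( sup_{x∈ℝ^d} |F(x,ξ)| ω(ξ) )^q dξ ≤ C Σ_{α∈Λ'_E} (|a(α)| ω(α))^q. -/
open MeasureTheory Filter
open scoped BigOperators InnerProductSpace Topology

noncomputable section

/-- The series `F(x,ξ) = Σ_{α ∈ Λ'_E} a(α) conj(φ̂(α−ξ)) e^{i⟨x,α−ξ⟩}`; one has
`|F(x,ξ)| = |V_φf(x,ξ)|` for the `E`-periodic object `f` with Fourier coefficients `a`. -/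
def FserMod {d : ℕ} (e' : Fin d → Euc d) (φ : Euc d → ℂ) (a : (Fin d → ℤ) → ℂ)
    (x ξ : Euc d) : ℂ :=
  ∑' ι : Fin d → ℤ,
    a ι * (starRingEnd ℂ) (FT φ (latPt e' ι - ξ)) *
      Complex.exp (Complex.I * (⟪x, latPt e' ι - ξ⟫_ℝ : ℂ))

/-!
Since `|e^{i⟨x,α-ξ⟩}| = 1`, `sup_x |F(x,ξ)| ≤ ∑_α |a(α)| |φ̂(α-ξ)|`, and moderateness of `ω`
together with the decay of `φ̂` at rate `R + 1` gives `|φ̂(α-ξ)| ω(ξ) ≤ C₀ C e^{-|α-ξ|} ω(α)`.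
It remains to bound `ξ ↦ ∑_α b_α e^{-|α-ξ|}` in `L^q` by `‖b‖_{ℓ^q}`. For `q ≤ 1` use
`(∑ u)^q ≤ ∑ u^q`; for `q ≥ 1` use Hölder, `(∑ b h)^q ≤ (∑ b^q h) (∑ h)^{q-1}`, where the lattice
sums `∑_α e^{-|α-ξ|}` are bounded uniformly in `ξ` because in the coordinates of the dual basis
they factor into one-dimensional sums. In both cases integrating term by term leaves translates
of the integrable `e^{-t|ξ|}`.
-/

open Module
open scoped ENNReal

namespace ENNReal

lemma rpow_tsum_le_tsum_rpow {ι : Type*} (u : ι → ℝ≥0∞) {p : ℝ} (hp₀ : 0 < p) (hp₁ : p ≤ 1) :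
    (∑' i, u i) ^ p ≤ ∑' i, u i ^ p := by
  have hfin (s : Finset ι) : (∑ i ∈ s, u i) ^ p ≤ ∑ i ∈ s, u i ^ p := by
    induction s using Finset.cons_induction with
    | empty => simp [zero_rpow_of_pos hp₀]
    | cons a s ha ih =>
      rw [Finset.sum_cons, Finset.sum_cons]
      exact (rpow_add_le_add_rpow _ _ hp₀.le hp₁).trans (by gcongr)
  rw [ENNReal.tsum_eq_iSup_sum, ← orderIsoRpow_apply p hp₀, OrderIso.map_iSup]
  exact iSup_le fun s => (hfin s).trans (ENNReal.sum_le_tsum s)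

lemma rpow_tsum_mul_le_of_one_le {ι : Type*} (b h : ι → ℝ≥0∞) {q : ℝ} (hq : 1 ≤ q) :
    (∑' i, b i * h i) ^ q ≤ (∑' i, b i ^ q * h i) * (∑' i, h i) ^ (q - 1) := by
  have hq₀ : 0 < q := zero_lt_one.trans_le hq
  have hsplit (i : ι) : b i * h i = (b i ^ q * h i) ^ q⁻¹ * h i ^ (1 - q⁻¹) := by
    rw [mul_rpow_of_nonneg _ _ (inv_nonneg.2 hq₀.le), rpow_rpow_inv hq₀.ne', mul_assoc,
      ← rpow_add_of_nonneg _ _ (inv_nonneg.2 hq₀.le) (sub_nonneg.2 (inv_le_one_of_one_le₀ hq)),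
      add_sub_cancel, rpow_one]
  -- Hölder for the counting measure, with exponents `q⁻¹ + (1 - q⁻¹) = 1`
  let _ : MeasurableSpace ι := ⊤
  have holder := lintegral_mul_norm_pow_le (μ := (Measure.count : Measure ι))
    (f := fun i => b i ^ q * h i) (g := h)
    measurable_from_top.aemeasurable measurable_from_top.aemeasurable (inv_nonneg.2 hq₀.le)
    (sub_nonneg.2 (inv_le_one_of_one_le₀ hq)) (add_sub_cancel _ _)
  simp only [lintegral_count, ← hsplit] at holder
  calc (∑' i, b i * h i) ^ q
      ≤ ((∑' i, b i ^ q * h i) ^ q⁻¹ * (∑' i, h i) ^ (1 - q⁻¹)) ^ q := by gcongr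
    _ = (∑' i, b i ^ q * h i) * (∑' i, h i) ^ (q - 1) := by
      rw [mul_rpow_of_nonneg _ _ hq₀.le, rpow_inv_rpow hq₀.ne', ← rpow_mul, sub_mul,
        inv_mul_cancel₀ hq₀.ne', one_mul]

lemma tsum_mul_ne_top_of_tsum_rpow_ne_top {ι : Type*} {b h : ι → ℝ≥0∞} {q : ℝ} (hq : 0 < q)
    (hb : ∑' i, b i ^ q ≠ ∞) (hh : ∑' i, h i ≠ ∞) : ∑' i, b i * h i ≠ ∞ := by
  have hb_le (i : ι) : b i ≤ (∑' j, b j ^ q) ^ q⁻¹ := by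
    conv_lhs => rw [← rpow_rpow_inv hq.ne' (b i)]
    gcongr
    exact ENNReal.le_tsum i
  refine ne_top_of_le_ne_top (mul_ne_top (rpow_ne_top_of_nonneg (inv_nonneg.2 hq.le) hb) hh) ?_
  calc ∑' i, b i * h i ≤ ∑' i, (∑' j, b j ^ q) ^ q⁻¹ * h i :=
        ENNReal.tsum_le_tsum fun i => by gcongr; exact hb_le i
    _ = _ := ENNReal.tsum_mul_left

lemma tsum_ofReal_rpow {ι : Type*} {f : ι → ℝ} (hf : ∀ i, 0 ≤ f i) {q : ℝ} (hq : 0 ≤ q)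
    (hs : Summable fun i => f i ^ q) :
    ∑' i, ENNReal.ofReal (f i) ^ q = ENNReal.ofReal (∑' i, f i ^ q) := by
  rw [ENNReal.ofReal_tsum_of_nonneg (fun i => Real.rpow_nonneg (hf i) q) hs]
  exact tsum_congr fun i => ENNReal.ofReal_rpow_of_nonneg (hf i) hq

lemma tsum_pi_prod_le_prod_tsum {ι κ : Type*} [Fintype ι] (g : ι → κ → ℝ≥0∞) :
    ∑' x : ι → κ, ∏ i, g i (x i) ≤ ∏ i, ∑' j, g i j := by
  classical
  rw [ENNReal.tsum_eq_iSup_sum]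
  refine iSup_le fun s => ?_
  calc ∑ x ∈ s, ∏ i, g i (x i)
      ≤ ∑ x ∈ Fintype.piFinset fun i => s.image (· i), ∏ i, g i (x i) :=
        Finset.sum_le_sum_of_subset fun x hx =>
          Fintype.mem_piFinset.2 fun i => Finset.mem_image_of_mem _ hx
    _ = ∏ i, ∑ j ∈ s.image (· i), g i j := (Finset.prod_univ_sum _ _).symm
    _ ≤ ∏ i, ∑' j, g i j := Finset.prod_le_prod' fun i _ => ENNReal.sum_le_tsum _

end ENNReal

lemma summable_exp_neg_mul_abs_int {l : ℝ} (hl : 0 < l) :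
    Summable fun j : ℤ => Real.exp (-l * |(j : ℝ)|) := by
  have hnat : Summable fun n : ℕ => Real.exp (n * -l) :=
    Real.summable_exp_nat_mul_iff.2 (neg_lt_zero.2 hl)
  refine .of_nat_of_neg ?_ ?_ <;> refine hnat.congr fun n => ?_ <;> simp [mul_comm]

lemma exists_tsum_int_exp_neg_mul_abs_sub_le {l : ℝ} (hl : 0 < l) :
    ∃ M ≠ ∞, ∀ u : ℝ, ∑' j : ℤ, ENNReal.ofReal (Real.exp (-l * |j - u|)) ≤ M := by
  refine ⟨ENNReal.ofReal (Real.exp l) * ∑' j : ℤ, ENNReal.ofReal (Real.exp (-l * |(j : ℝ)|)),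
    ENNReal.mul_ne_top ENNReal.ofReal_ne_top (summable_exp_neg_mul_abs_int hl).tsum_ofReal_ne_top,
    fun u => ?_⟩
  -- `|j - u| ≥ |j - ⌊u⌋| - 1`, and `j ↦ j - ⌊u⌋` is a bijection of `ℤ`
  have hshift (j : ℤ) : ENNReal.ofReal (Real.exp (-l * |j - u|)) ≤
      ENNReal.ofReal (Real.exp l) * ENNReal.ofReal (Real.exp (-l * |((j - ⌊u⌋ : ℤ) : ℝ)|)) := by
    rw [← ENNReal.ofReal_mul (Real.exp_nonneg _), ← Real.exp_add]
    refine ENNReal.ofReal_le_ofReal (Real.exp_le_exp.2 ?_)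
    have h₁ := abs_sub_le (j : ℝ) u ⌊u⌋
    have h₂ : |u - ⌊u⌋| ≤ 1 := by
      rw [abs_of_nonneg (sub_nonneg.2 (Int.floor_le u))]
      linarith [Int.lt_floor_add_one u]
    push_cast
    nlinarith
  calc ∑' j : ℤ, ENNReal.ofReal (Real.exp (-l * |j - u|))
      ≤ ∑' j : ℤ, ENNReal.ofReal (Real.exp l) *
          ENNReal.ofReal (Real.exp (-l * |((j - ⌊u⌋ : ℤ) : ℝ)|)) := ENNReal.tsum_le_tsum hshift
    _ = _ := by
      rw [ENNReal.tsum_mul_left]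
      exact congrArg _
        ((Equiv.subRight ⌊u⌋).tsum_eq fun j : ℤ => ENNReal.ofReal (Real.exp (-l * |(j : ℝ)|)))

namespace Module.Basis

variable {ι V : Type*} [Fintype ι] [NormedAddCommGroup V] [NormedSpace ℝ V] [FiniteDimensional ℝ V]

lemma exists_pos_mul_sum_abs_repr_le_norm (b : Basis ι ℝ V) :
    ∃ c > 0, ∀ x, c * ∑ i, |b.repr x i| ≤ ‖x‖ := by
  set K := ∑ i, ‖LinearMap.toContinuousLinearMap (b.coord i)‖
  refine ⟨(K + 1)⁻¹, by positivity, fun x => ?_⟩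
  have hcoord : ∑ i, |b.repr x i| ≤ K * ‖x‖ := by
    rw [Finset.sum_mul]
    exact Finset.sum_le_sum fun i _ =>
      (LinearMap.toContinuousLinearMap (b.coord i)).le_opNorm x
  rw [inv_mul_le_iff₀ (by positivity)]
  nlinarith [norm_nonneg x]

lemma exists_tsum_exp_neg_norm_sum_smul_sub_le (b : Basis ι ℝ V) {s : ℝ} (hs : 0 < s) :
    ∃ M ≠ ∞, ∀ ξ : V,
      ∑' k : ι → ℤ, ENNReal.ofReal (Real.exp (-s * ‖∑ i, (k i : ℝ) • b i - ξ‖)) ≤ M := by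
  obtain ⟨c, hc, hcoord⟩ := b.exists_pos_mul_sum_abs_repr_le_norm
  obtain ⟨M, hM, hline⟩ := exists_tsum_int_exp_neg_mul_abs_sub_le (mul_pos hs hc)
  refine ⟨M ^ Fintype.card ι, ENNReal.pow_ne_top hM, fun ξ => ?_⟩
  have hfactor (k : ι → ℤ) : ENNReal.ofReal (Real.exp (-s * ‖∑ i, (k i : ℝ) • b i - ξ‖)) ≤
      ∏ i, ENNReal.ofReal (Real.exp (-(s * c) * |k i - b.repr ξ i|)) := by
    rw [← ENNReal.ofReal_prod_of_nonneg fun i _ => (Real.exp_pos _).le, ← Real.exp_sum]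
    refine ENNReal.ofReal_le_ofReal (Real.exp_le_exp.2 ?_)
    have h := hcoord (∑ i, (k i : ℝ) • b i - ξ)
    simp only [map_sub, b.repr_sum_self, Finsupp.coe_sub, Pi.sub_apply] at h
    rw [← Finset.mul_sum, neg_mul, neg_mul, neg_le_neg_iff, mul_assoc]
    exact mul_le_mul_of_nonneg_left h hs.le
  calc ∑' k : ι → ℤ, ENNReal.ofReal (Real.exp (-s * ‖∑ i, (k i : ℝ) • b i - ξ‖))
      ≤ ∑' k : ι → ℤ, ∏ i, ENNReal.ofReal (Real.exp (-(s * c) * |k i - b.repr ξ i|)) :=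
        ENNReal.tsum_le_tsum hfactor
    _ ≤ ∏ i, ∑' j : ℤ, ENNReal.ofReal (Real.exp (-(s * c) * |j - b.repr ξ i|)) :=
        ENNReal.tsum_pi_prod_le_prod_tsum fun i (j : ℤ) => _
    _ ≤ ∏ _i : ι, M := Finset.prod_le_prod' fun i _ => hline _
    _ = M ^ Fintype.card ι := Finset.prod_const _

end Module.Basis

section Haar

variable {V : Type*} [NormedAddCommGroup V] [NormedSpace ℝ V] [FiniteDimensional ℝ V]
  [MeasurableSpace V] [BorelSpace V] (μ : Measure V) [μ.IsAddHaarMeasure]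

lemma integrable_exp_neg_mul_norm {t : ℝ} (ht : 0 < t) :
    Integrable (fun x : V => Real.exp (-t * ‖x‖)) μ := by
  set n : ℝ := finrank ℝ V + 1
  have hn : 0 < n := by positivity
  -- `1 + r ≤ exp r` compares `exp (-n r)` with the integrable `(1 + r) ^ (-n)`
  have hbase : Integrable (fun x : V => Real.exp (-n * ‖x‖)) μ := by
    refine (integrable_one_add_norm (μ := μ) (r := n) (by simp [n])).mono' (by fun_prop)
      (.of_forall fun x => ?_)
    rw [Real.norm_of_nonneg (Real.exp_nonneg _), Real.rpow_neg (by positivity), neg_mul,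
      Real.exp_neg, mul_comm, Real.exp_mul]
    gcongr
    linarith [Real.add_one_le_exp ‖x‖]
  convert hbase.comp_smul (R := t / n) (by positivity) using 3 with x
  rw [norm_smul, Real.norm_of_nonneg (by positivity)]
  field_simp

lemma lintegral_tsum_mul_exp_neg_norm_sub {ι : Type*} [Countable ι] (c : ι → ℝ≥0∞) (p : ι → V)
    (t : ℝ) : ∫⁻ ξ, ∑' i, c i * ENNReal.ofReal (Real.exp (-t * ‖p i - ξ‖)) ∂μ =
      (∑' i, c i) * ∫⁻ ξ, ENNReal.ofReal (Real.exp (-t * ‖ξ‖)) ∂μ := by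
  have hmeas (i : ι) : Measurable fun ξ => ENNReal.ofReal (Real.exp (-t * ‖p i - ξ‖)) := by
    fun_prop
  have htrans (i : ι) : ∫⁻ ξ, ENNReal.ofReal (Real.exp (-t * ‖p i - ξ‖)) ∂μ =
      ∫⁻ ξ, ENNReal.ofReal (Real.exp (-t * ‖ξ‖)) ∂μ :=
    lintegral_sub_left_eq_self (fun ξ => ENNReal.ofReal (Real.exp (-t * ‖ξ‖))) (p i)
  rw [lintegral_tsum fun i => ((hmeas i).const_mul _).aemeasurable]
  simp_rw [lintegral_const_mul _ (hmeas _), htrans, ENNReal.tsum_mul_right]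

lemma exists_lintegral_rpow_tsum_mul_exp_neg_norm_sub_le {ι : Type*} [Countable ι] (p : ι → V)
    {q s : ℝ} (hq : 0 < q) (hs : 0 < s) {M : ℝ≥0∞} (hM : M ≠ ∞)
    (hp : ∀ ξ, ∑' i, ENNReal.ofReal (Real.exp (-s * ‖p i - ξ‖)) ≤ M) :
    ∃ K ≠ ∞, ∀ b : ι → ℝ≥0∞,
      ∫⁻ ξ, (∑' i, b i * ENNReal.ofReal (Real.exp (-s * ‖p i - ξ‖))) ^ q ∂μ ≤
        K * ∑' i, b i ^ q := by
  have hI {t : ℝ} (ht : 0 < t) : ∫⁻ ξ, ENNReal.ofReal (Real.exp (-t * ‖ξ‖)) ∂μ ≠ ∞ :=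
    (integrable_exp_neg_mul_norm μ ht).lintegral_lt_top.ne
  rcases le_total q 1 with hq₁ | hq₁
  · refine ⟨_, hI (mul_pos hq hs), fun b => ?_⟩
    calc ∫⁻ ξ, (∑' i, b i * ENNReal.ofReal (Real.exp (-s * ‖p i - ξ‖))) ^ q ∂μ
        ≤ ∫⁻ ξ, ∑' i, b i ^ q * ENNReal.ofReal (Real.exp (-(q * s) * ‖p i - ξ‖)) ∂μ := by
          refine lintegral_mono fun ξ => (ENNReal.rpow_tsum_le_tsum_rpow _ hq hq₁).trans_eq ?_
          refine tsum_congr fun i => ?_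
          rw [ENNReal.mul_rpow_of_nonneg _ _ hq.le,
            ENNReal.ofReal_rpow_of_nonneg (Real.exp_nonneg _) hq.le, ← Real.exp_mul]
          ring_nf
      _ = _ := by rw [lintegral_tsum_mul_exp_neg_norm_sub, mul_comm]
  · have hMq : M ^ (q - 1) ≠ ∞ := ENNReal.rpow_ne_top_of_nonneg (sub_nonneg.2 hq₁) hM
    refine ⟨_, ENNReal.mul_ne_top hMq (hI hs), fun b => ?_⟩
    calc ∫⁻ ξ, (∑' i, b i * ENNReal.ofReal (Real.exp (-s * ‖p i - ξ‖))) ^ q ∂μ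
        ≤ ∫⁻ ξ, (∑' i, b i ^ q * ENNReal.ofReal (Real.exp (-s * ‖p i - ξ‖))) * M ^ (q - 1) ∂μ :=
          lintegral_mono fun ξ =>
            (ENNReal.rpow_tsum_mul_le_of_one_le _ _ hq₁).trans (by gcongr; exact hp ξ)
      _ = _ := by
          rw [lintegral_mul_const' _ _ hMq, lintegral_tsum_mul_exp_neg_norm_sub]
          ring

end Haar

section ModerateWeight

variable {ι V : Type*} [NormedAddCommGroup V] {ω : V → ℝ} {C₀ R s Cr : ℝ} {f : V → ℂ}

lemma norm_mul_weight_le_of_moderate (hω : ∀ ξ, 0 ≤ ω ξ)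
    (hmod : ∀ ξ η, ω (ξ + η) ≤ C₀ * Real.exp (R * ‖η‖) * ω ξ)
    (hf : ∀ η, ‖f η‖ ≤ Cr * Real.exp (-(R + s) * ‖η‖)) (α ξ : V) :
    ‖f (α - ξ)‖ * ω ξ ≤ C₀ * Cr * ω α * Real.exp (-s * ‖α - ξ‖) := by
  have hωξ : ω ξ ≤ C₀ * Real.exp (R * ‖α - ξ‖) * ω α := by
    simpa [norm_sub_rev] using hmod α (ξ - α)
  calc ‖f (α - ξ)‖ * ω ξ
      ≤ Cr * Real.exp (-(R + s) * ‖α - ξ‖) * (C₀ * Real.exp (R * ‖α - ξ‖) * ω α) :=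
        mul_le_mul (hf _) hωξ (hω ξ) ((norm_nonneg _).trans (hf _))
    _ = C₀ * Cr * ω α * (Real.exp (-(R + s) * ‖α - ξ‖) * Real.exp (R * ‖α - ξ‖)) := by ring
    _ = C₀ * Cr * ω α * Real.exp (-s * ‖α - ξ‖) := by rw [← Real.exp_add]; ring_nf

lemma summable_and_ofReal_tsum_mul_weight_le [Countable ι] (hC₀ : 0 ≤ C₀) (hCr : 0 ≤ Cr)
    (hω : ∀ ξ, 0 ≤ ω ξ) (hmod : ∀ ξ η, ω (ξ + η) ≤ C₀ * Real.exp (R * ‖η‖) * ω ξ)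
    (hf : ∀ η, ‖f η‖ ≤ Cr * Real.exp (-(R + s) * ‖η‖)) (p : ι → V) (a : ι → ℂ) {ξ : V}
    (hωξ : 0 < ω ξ)
    (hfin : ∑' i, ENNReal.ofReal (‖a i‖ * ω (p i)) *
      ENNReal.ofReal (Real.exp (-s * ‖p i - ξ‖)) ≠ ∞) :
    Summable (fun i => ‖a i‖ * ‖f (p i - ξ)‖) ∧
      ENNReal.ofReal ((∑' i, ‖a i‖ * ‖f (p i - ξ)‖) * ω ξ) ≤
        ENNReal.ofReal (C₀ * Cr) * ∑' i, ENNReal.ofReal (‖a i‖ * ω (p i)) *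
          ENNReal.ofReal (Real.exp (-s * ‖p i - ξ‖)) := by
  have hterm (i : ι) : ENNReal.ofReal (‖a i‖ * ‖f (p i - ξ)‖ * ω ξ) ≤
      ENNReal.ofReal (C₀ * Cr) * (ENNReal.ofReal (‖a i‖ * ω (p i)) *
        ENNReal.ofReal (Real.exp (-s * ‖p i - ξ‖))) := by
    rw [← ENNReal.ofReal_mul (mul_nonneg (norm_nonneg _) (hω _)),
      ← ENNReal.ofReal_mul (mul_nonneg hC₀ hCr)]
    refine ENNReal.ofReal_le_ofReal ?_
    rw [mul_assoc]
    calc ‖a i‖ * (‖f (p i - ξ)‖ * ω ξ)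
        ≤ ‖a i‖ * (C₀ * Cr * ω (p i) * Real.exp (-s * ‖p i - ξ‖)) :=
          mul_le_mul_of_nonneg_left (norm_mul_weight_le_of_moderate hω hmod hf _ _) (norm_nonneg _)
      _ = _ := by ring
  have hle := (ENNReal.tsum_le_tsum hterm).trans_eq ENNReal.tsum_mul_left
  have hsum : Summable fun i => ‖a i‖ * ‖f (p i - ξ)‖ * ω ξ := by
    have hnn (i : ι) : 0 ≤ ‖a i‖ * ‖f (p i - ξ)‖ * ω ξ := by positivity
    have hne := ne_top_of_le_ne_top (ENNReal.mul_ne_top ENNReal.ofReal_ne_top hfin) hle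
    simpa [ENNReal.toReal_ofReal (hnn _)] using ENNReal.summable_toReal hne
  refine ⟨(summable_mul_right_iff hωξ.ne').1 hsum, ?_⟩
  rwa [← tsum_mul_right, ENNReal.ofReal_tsum_of_nonneg (fun i => by positivity) hsum]

end ModerateWeight

lemma exists_basis_coe_eq_of_inner_eq_ite {ι V : Type*} [Fintype ι] [DecidableEq ι]
    [NormedAddCommGroup V] [InnerProductSpace ℝ V] [FiniteDimensional ℝ V] {e e' : ι → V} {c : ℝ}
    (hc : c ≠ 0) (h : ∀ j k, ⟪e j, e' k⟫_ℝ = if j = k then c else 0)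
    (hcard : Fintype.card ι = finrank ℝ V) : ∃ b : Basis ι ℝ V, ⇑b = e' := by
  have hli : LinearIndependent ℝ e' := by
    rw [Fintype.linearIndependent_iff]
    intro g hg j
    have hj := congrArg (inner ℝ (e j)) hg
    simp only [inner_sum, real_inner_smul_right, h, mul_ite, mul_zero, Finset.sum_ite_eq,
      Finset.mem_univ, if_true, inner_zero_right] at hj
    exact (mul_eq_zero.1 hj).resolve_right hc
  exact ⟨.mk hli (hli.span_eq_top_of_card_eq_finrank' hcard).ge, Basis.coe_mk _ _⟩

lemma norm_mul_conj_mul_exp_I_mul_ofReal (z w : ℂ) (t : ℝ) :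
    ‖z * (starRingEnd ℂ) w * Complex.exp (Complex.I * t)‖ = ‖z‖ * ‖w‖ := by
  rw [norm_mul, norm_mul, RCLike.norm_conj, mul_comm Complex.I, Complex.norm_exp_ofReal_mul_I,
    mul_one]

lemma ofReal_iSup_norm_fserMod_mul_rpow_le {d : ℕ} (e' : Fin d → Euc d) (φ : Euc d → ℂ)
    (a : (Fin d → ℤ) → ℂ) {w q : ℝ} (hw : 0 ≤ w) (hq : 0 ≤ q) {ξ : Euc d} {B : ℝ≥0∞}
    (hs : Summable fun ι => ‖a ι‖ * ‖FT φ (latPt e' ι - ξ)‖)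
    (hB : ENNReal.ofReal ((∑' ι, ‖a ι‖ * ‖FT φ (latPt e' ι - ξ)‖) * w) ≤ B) :
    ENNReal.ofReal ((⨆ x, ‖FserMod e' φ a x ξ‖ * w) ^ q) ≤ B ^ q := by
  have hF (x : Euc d) : ‖FserMod e' φ a x ξ‖ ≤ ∑' ι, ‖a ι‖ * ‖FT φ (latPt e' ι - ξ)‖ := by
    have hnorm (ι : Fin d → ℤ) := norm_mul_conj_mul_exp_I_mul_ofReal (a ι)
      (FT φ (latPt e' ι - ξ)) ⟪x, latPt e' ι - ξ⟫_ℝ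
    exact (norm_tsum_le_tsum_norm (hs.congr fun ι => (hnorm ι).symm)).trans_eq (tsum_congr hnorm)
  rw [← ENNReal.ofReal_rpow_of_nonneg (Real.iSup_nonneg fun x => by positivity) hq]
  refine ENNReal.rpow_le_rpow (le_trans (ENNReal.ofReal_le_ofReal ?_) hB) hq
  exact ciSup_le fun x => mul_le_mul_of_nonneg_right (hF x) hw

theorem periodic_modulation_norm_le_coeff_norm_general
    {d : ℕ} (q : ℝ) (hq : 0 < q)
    (e e' : Fin d → Euc d)
    (hdual : ∀ j k, ⟪e j, e' k⟫_ℝ = if j = k then 2 * Real.pi else 0)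
    (ω : Euc d → ℝ) (hω : ∀ ξ, 0 < ω ξ)
    (C₀ R : ℝ) (hC₀ : 0 < C₀) (hR : 0 < R)
    (hmod : ∀ ξ η : Euc d, ω (ξ + η) ≤ C₀ * Real.exp (R * ‖η‖) * ω ξ)
    (φ : Euc d → ℂ)
    (hφ : ∀ r : ℝ, 0 < r → ∃ Cr : ℝ, 0 < Cr ∧
      (∀ x : Euc d, ‖φ x‖ ≤ Cr * Real.exp (-r * ‖x‖)) ∧
      (∀ ξ : Euc d, ‖FT φ ξ‖ ≤ Cr * Real.exp (-r * ‖ξ‖))) :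
    ∃ C : ℝ, 0 < C ∧ ∀ a : (Fin d → ℤ) → ℂ,
      Summable (fun ι : Fin d → ℤ => (‖a ι‖ * ω (latPt e' ι)) ^ q) →
      (∀ x ξ : Euc d, Summable fun ι : Fin d → ℤ =>
          ‖a ι * (starRingEnd ℂ) (FT φ (latPt e' ι - ξ)) *
              Complex.exp (Complex.I * (⟪x, latPt e' ι - ξ⟫_ℝ : ℂ))‖) ∧
      (∫⁻ ξ : Euc d,
          ENNReal.ofReal ((⨆ x : Euc d, ‖FserMod e' φ a x ξ‖ * ω ξ) ^ q)) ≤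
        ENNReal.ofReal (C * ∑' ι : Fin d → ℤ, (‖a ι‖ * ω (latPt e' ι)) ^ q) := by
  obtain ⟨b, rfl⟩ := exists_basis_coe_eq_of_inner_eq_ite (by positivity) hdual (by simp)
  obtain ⟨Cr, hCr, -, hFT⟩ := hφ (R + 1) (by positivity)
  obtain ⟨M, hM, hlat⟩ := b.exists_tsum_exp_neg_norm_sum_smul_sub_le one_pos
  obtain ⟨K, hK, hint⟩ :=
    exists_lintegral_rpow_tsum_mul_exp_neg_norm_sub_le volume (latPt b) hq one_pos hM hlat
  refine ⟨(ENNReal.ofReal (C₀ * Cr) ^ q * K).toReal + 1, by positivity, fun a ha => ?_⟩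
  set D : (Fin d → ℤ) → ℝ≥0∞ := fun ι => ENNReal.ofReal (‖a ι‖ * ω (latPt b ι))
  have hDq : ∑' ι, D ι ^ q = ENNReal.ofReal (∑' ι, (‖a ι‖ * ω (latPt b ι)) ^ q) :=
    ENNReal.tsum_ofReal_rpow (fun ι => mul_nonneg (norm_nonneg _) (hω _).le) hq.le ha
  have hfin (ξ : Euc d) :
      ∑' ι, D ι * ENNReal.ofReal (Real.exp (-1 * ‖latPt b ι - ξ‖)) ≠ ∞ :=
    ENNReal.tsum_mul_ne_top_of_tsum_rpow_ne_top hq (hDq ▸ ENNReal.ofReal_ne_top)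
      (ne_top_of_le_ne_top hM (hlat ξ))
  have henv (ξ : Euc d) := summable_and_ofReal_tsum_mul_weight_le hC₀.le hCr.le
    (fun ξ => (hω ξ).le) hmod hFT (latPt b) a (hω ξ) (hfin ξ)
  refine ⟨fun x ξ => (henv ξ).1.congr fun ι => (norm_mul_conj_mul_exp_I_mul_ofReal _ _ _).symm, ?_⟩
  calc ∫⁻ ξ, ENNReal.ofReal ((⨆ x, ‖FserMod b φ a x ξ‖ * ω ξ) ^ q)
      ≤ ∫⁻ ξ, ENNReal.ofReal (C₀ * Cr) ^ q *
          (∑' ι, D ι * ENNReal.ofReal (Real.exp (-1 * ‖latPt b ι - ξ‖))) ^ q :=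
        lintegral_mono fun ξ => (ofReal_iSup_norm_fserMod_mul_rpow_le b φ a (hω ξ).le hq.le
          (henv ξ).1 (henv ξ).2).trans_eq (ENNReal.mul_rpow_of_nonneg _ _ hq.le)
    _ ≤ ENNReal.ofReal (C₀ * Cr) ^ q * (K * ∑' ι, D ι ^ q) := by
        rw [lintegral_const_mul' _ _ (ENNReal.rpow_ne_top_of_nonneg hq.le ENNReal.ofReal_ne_top)]
        gcongr
        exact hint D
    _ ≤ _ := by
        rw [hDq, ← mul_assoc, ENNReal.ofReal_mul (p := _ + 1) (by positivity)]
        refine mul_le_mul' ?_ le_rfl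
        exact (ENNReal.le_ofReal_iff_toReal_le (by finiteness) (by positivity)).2 (by linarith)

/-- the modulation-space-type bound `‖f‖_{M^{∞,q}_{(ω)}} ≲ ‖(a·ω)‖_{ℓ^q}` for
`E`-periodic elements with Fourier coefficients `a`, for `0 < q < ∞` and moderate `ω`. -/
theorem periodic_modulation_norm_le_coeff_norm
    {d : ℕ} (hd : 1 ≤ d) (q : ℝ) (hq : 0 < q)
    (e e' : Fin d → Euc d) (he : LinearIndependent ℝ e)
    (hdual : ∀ j k, ⟪e j, e' k⟫_ℝ = if j = k then 2 * Real.pi else 0)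
    (ω : Euc d → ℝ) (hω : ∀ ξ, 0 < ω ξ)
    (C₀ R : ℝ) (hC₀ : 0 < C₀) (hR : 0 < R)
    (hmod : ∀ ξ η : Euc d, ω (ξ + η) ≤ C₀ * Real.exp (R * ‖η‖) * ω ξ)
    (φ : Euc d → ℂ) (hφc : Continuous φ) (hφne : φ ≠ 0)
    (hφ : ∀ r : ℝ, 0 < r → ∃ Cr : ℝ, 0 < Cr ∧
      (∀ x : Euc d, ‖φ x‖ ≤ Cr * Real.exp (-r * ‖x‖)) ∧
      (∀ ξ : Euc d, ‖FT φ ξ‖ ≤ Cr * Real.exp (-r * ‖ξ‖))) :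
    ∃ C : ℝ, 0 < C ∧ ∀ a : (Fin d → ℤ) → ℂ,
      Summable (fun ι : Fin d → ℤ => (‖a ι‖ * ω (latPt e' ι)) ^ q) →
      (∀ x ξ : Euc d, Summable fun ι : Fin d → ℤ =>
          ‖a ι * (starRingEnd ℂ) (FT φ (latPt e' ι - ξ)) *
              Complex.exp (Complex.I * (⟪x, latPt e' ι - ξ⟫_ℝ : ℂ))‖) ∧
      (∫⁻ ξ : Euc d,
          ENNReal.ofReal ((⨆ x : Euc d, ‖FserMod e' φ a x ξ‖ * ω ξ) ^ q)) ≤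
        ENNReal.ofReal (C * ∑' ι : Fin d → ℤ, (‖a ι‖ * ω (latPt e' ι)) ^ q) :=
  periodic_modulation_norm_le_coeff_norm_general q hq e e' hdual ω hω C₀ R hC₀ hR hmod φ hφ

end
end

section
/- Let d ≥ 1, E ⊆ ℝ^d be a non-degenerate parallelepiped and let c : Λ'_E → ℂ satisfy |c(α)| ≤ C (1+|α|)^N for all α ∈ Λ'_E, for some constants C > 0 and N ≥ 0. Then for every Schwartz function φ on ℝ^d the series Σ_{α∈Λ'_E} c(α) φ̂(−α) converges absolutely, the map u(φ) = (2π)^{d/2} Σ_{α∈Λ'_E} c(α) φ̂(−α) defines a tempered distribution on ℝ^d, u is E-periodic (u(φ(·−k)) = u(φ) for all k ∈ Λ_E), and u is the limit in the sense of tempered distributions of the partial sums Σ_{α∈Λ'_E, |α|≤M} c(α) e^{i⟨·,α⟩} as M → ∞. -/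
open MeasureTheory Filter
open scoped BigOperators InnerProductSpace Topology

noncomputable section

open scoped FourierTransform SchwartzMap

/-!
Mathlib's `𝓕` has kernel `e^{-2πi⟨x,ξ⟩}`, so `φ̂(-α) = (2π)^{-d/2} 𝓕 φ (-α/2π)` and `u` is the
weighted Dirac comb `ψ ↦ ∑_α c(α) ψ(-α/2π)` composed with `𝓕`. The comb is continuous on Schwartz
space: `(1 + |x|)^k |ψ x|` is bounded by a Schwartz seminorm, and `∑_α |c(α)| (1 + |α|)^{-k}`
converges once `k > N + d`, by the `p`-series bound on lattices. Translating `φ` by `k ∈ Λ_E`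
multiplies `𝓕 φ (-α/2π)` by `e^{i⟨k,α⟩} = 1`, since `⟨k, α⟩ ∈ 2πℤ`; the partial sums converge to
`u ψ` by dominated convergence for series.
-/

theorem LinearIndependent.of_inner_eq_ite {F ι : Type*} [NormedAddCommGroup F]
    [InnerProductSpace ℝ F] [Fintype ι] [DecidableEq ι] {e e' : ι → F} {a : ℝ} (ha : a ≠ 0)
    (h : ∀ j k, ⟪e j, e' k⟫_ℝ = if j = k then a else 0) : LinearIndependent ℝ e' := by
  rw [Fintype.linearIndependent_iff]
  intro g hg j
  have hj := congrArg (fun v => ⟪e j, v⟫_ℝ) hg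
  simp only [inner_sum, real_inner_smul_right, h, mul_ite, mul_zero, Finset.sum_ite_eq,
    Finset.mem_univ, if_true, inner_zero_right] at hj
  exact (mul_eq_zero.1 hj).resolve_right ha

theorem Module.Basis.summable_inv_one_add_norm_sum_pow {E ι : Type*} [NormedAddCommGroup E]
    [NormedSpace ℝ E] [FiniteDimensional ℝ E] [Fintype ι] (b : Module.Basis ι ℝ E) {n : ℕ}
    (hn : Fintype.card ι < n) :
    Summable fun k : ι → ℤ => ((1 + ‖∑ i, (k i : ℝ) • b i‖) ^ n)⁻¹ := by
  let bℤ := b.restrictScalars ℤ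
  have hrank : Module.finrank ℤ (Submodule.span ℤ (Set.range b)) < n := by
    rwa [Module.finrank_eq_card_basis bℤ]
  have hcoe (k : ι → ℤ) : ‖bℤ.equivFun.symm k‖ = ‖∑ i, (k i : ℝ) • b i‖ := by
    simp [bℤ, Module.Basis.equivFun_symm_apply, Int.cast_smul_eq_zsmul]
  refine ((ZLattice.summable_norm_pow_inv _ n hrank).comp_injective
    bℤ.equivFun.symm.injective).of_norm_bounded_eventually ?_
  filter_upwards [(Set.finite_singleton (0 : ι → ℤ)).compl_mem_cofinite] with k hk
  have hpos : 0 < ‖∑ i, (k i : ℝ) • b i‖ := by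
    rw [← hcoe, norm_pos_iff]
    exact (map_ne_zero_iff _ bℤ.equivFun.symm.injective).2 hk
  rw [Function.comp_apply, hcoe, Real.norm_of_nonneg (by positivity), ← inv_pow]
  gcongr
  linarith

theorem summable_norm_mul_inv_one_add_pow_of_le_rpow {α F : Type*} [SeminormedAddCommGroup F]
    {c : α → F} {a : α → ℝ} {C N : ℝ} {n : ℕ} (ha : ∀ k, 0 ≤ a k)
    (hc : ∀ k, ‖c k‖ ≤ C * (1 + a k) ^ N) (hsum : Summable fun k => ((1 + a k) ^ n)⁻¹) :
    Summable fun k => ‖c k‖ * ((1 + a k) ^ (⌈N⌉₊ + n))⁻¹ := by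
  refine (hsum.mul_left C).of_nonneg_of_le (fun k => ?_) fun k => ?_
  · have := ha k
    positivity
  have hx : 1 ≤ 1 + a k := by linarith [ha k]
  have hC : 0 ≤ C := nonneg_of_mul_nonneg_left ((norm_nonneg _).trans (hc k)) (by positivity)
  have hcm : ‖c k‖ ≤ C * (1 + a k) ^ ⌈N⌉₊ := by
    refine (hc k).trans (mul_le_mul_of_nonneg_left ?_ hC)
    exact_mod_cast Real.rpow_le_rpow_of_exponent_le hx (Nat.le_ceil N)
  calc ‖c k‖ * ((1 + a k) ^ (⌈N⌉₊ + n))⁻¹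
      ≤ C * (1 + a k) ^ ⌈N⌉₊ * ((1 + a k) ^ (⌈N⌉₊ + n))⁻¹ := by gcongr
    _ = C * ((1 + a k) ^ n)⁻¹ := by rw [pow_add]; field_simp

theorem inv_one_add_norm_inv_smul_pow_le {V : Type*} [NormedAddCommGroup V] [NormedSpace ℝ V]
    (v : V) {R : ℝ} (hR : 1 ≤ R) (m : ℕ) :
    ((1 + ‖R⁻¹ • v‖) ^ m)⁻¹ ≤ R ^ m * ((1 + ‖v‖) ^ m)⁻¹ := by
  have h : R⁻¹ * (1 + ‖v‖) ≤ 1 + ‖R⁻¹ • v‖ := by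
    rw [norm_smul, Real.norm_of_nonneg (by positivity), mul_one_add]
    gcongr
    exact inv_le_one_of_one_le₀ hR
  calc ((1 + ‖R⁻¹ • v‖) ^ m)⁻¹ ≤ ((R⁻¹ * (1 + ‖v‖)) ^ m)⁻¹ := by gcongr
    _ = R ^ m * ((1 + ‖v‖) ^ m)⁻¹ := by rw [mul_pow, mul_inv, inv_pow, inv_inv]

theorem tendsto_tsum_ite_le_natCast {ι F : Type*} [NormedAddCommGroup F] [CompleteSpace F]
    {f : ι → F} (hf : Summable (‖f ·‖)) (r : ι → ℝ) :
    Tendsto (fun M : ℕ => ∑' i, if r i ≤ M then f i else 0) atTop (𝓝 (∑' i, f i)) := by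
  refine tendsto_tsum_of_dominated_convergence hf (fun i => ?_) (.of_forall fun M i => ?_)
  · refine tendsto_const_nhds.congr' ?_
    filter_upwards [eventually_ge_atTop ⌈r i⌉₊] with M hM
    rw [if_pos ((Nat.le_ceil _).trans (by exact_mod_cast hM))]
  · split_ifs <;> simp

namespace SchwartzMap

variable {V ι : Type*} [NormedAddCommGroup V] [NormedSpace ℝ V]

theorem norm_mul_apply_le_seminorm (f : 𝓢(V, ℂ)) (k : ℕ) (a : ℂ) (x : V) :
    ‖a * f x‖ ≤ ‖a‖ * ((1 + ‖x‖) ^ k)⁻¹ *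
      (2 ^ k * (Finset.Iic (k, 0)).sup (schwartzSeminormFamily ℂ V ℂ) f) := by
  have hf := one_add_le_sup_seminorm_apply (𝕜 := ℂ) (m := (k, 0)) le_rfl le_rfl f x
  rw [norm_iteratedFDeriv_zero] at hf
  rw [norm_mul, mul_assoc]
  gcongr
  rw [le_inv_mul_iff₀ (by positivity)]
  exact hf

variable {c : ι → ℂ} {x : ι → V} {k : ℕ}

theorem summable_norm_mul_apply (hc : Summable fun i => ‖c i‖ * ((1 + ‖x i‖) ^ k)⁻¹)
    (f : 𝓢(V, ℂ)) : Summable fun i => ‖c i * f (x i)‖ :=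
  (hc.mul_right _).of_nonneg_of_le (fun _ => norm_nonneg _)
    fun i => norm_mul_apply_le_seminorm f k (c i) (x i)

def diracSumCLM (hc : Summable fun i => ‖c i‖ * ((1 + ‖x i‖) ^ k)⁻¹) : 𝓢(V, ℂ) →L[ℂ] ℂ :=
  mkCLMtoNormedSpace (fun f => ∑' i, c i * f (x i))
    (fun f g => by
      simp only [add_apply, mul_add]
      exact ((summable_norm_mul_apply hc f).of_norm.tsum_add
        (summable_norm_mul_apply hc g).of_norm))
    (fun a f => by
      simp only [smul_apply, smul_eq_mul, RingHom.id_apply, ← tsum_mul_left]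
      exact tsum_congr fun i => mul_left_comm _ _ _)
    ⟨Finset.Iic (k, 0), 2 ^ k * ∑' i, ‖c i‖ * ((1 + ‖x i‖) ^ k)⁻¹,
      by positivity, fun f => by
        refine (norm_tsum_le_tsum_norm (summable_norm_mul_apply hc f)).trans ?_
        rw [mul_comm (2 ^ k : ℝ), mul_assoc, ← tsum_mul_right]
        exact (summable_norm_mul_apply hc f).tsum_le_tsum
          (fun i => norm_mul_apply_le_seminorm f k (c i) (x i)) (hc.mul_right _)⟩

theorem diracSumCLM_apply (hc : Summable fun i => ‖c i‖ * ((1 + ‖x i‖) ^ k)⁻¹)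
    (f : 𝓢(V, ℂ)) : diracSumCLM hc f = ∑' i, c i * f (x i) :=
  rfl

end SchwartzMap

section Fourier

theorem Real.fourierChar_intCast (n : ℤ) : 𝐞 n = 1 := by
  ext
  rw [Real.fourierChar_apply, Circle.coe_one, ← Complex.exp_int_mul_two_pi_mul_I n]
  push_cast
  ring_nf

variable {V : Type*} [NormedAddCommGroup V] [InnerProductSpace ℝ V] [FiniteDimensional ℝ V]
  [MeasurableSpace V] [BorelSpace V]

theorem Real.fourier_inv_two_pi_smul (f : V → ℂ) (ξ : V) :
    𝓕 f ((2 * Real.pi)⁻¹ • ξ) = ∫ x, Complex.exp (-Complex.I * ⟪x, ξ⟫_ℝ) * f x := by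
  simp only [Real.fourier_eq', real_inner_smul_right, smul_eq_mul]
  congr 1 with x
  congr 2
  field_simp
  push_cast
  ring

theorem Real.integral_exp_inner_mul_eq_fourier (f : V → ℂ) (α : V) :
    ∫ x, Complex.exp (Complex.I * ⟪x, α⟫_ℝ) * f x = 𝓕 f ((2 * Real.pi)⁻¹ • -α) := by
  simp only [Real.fourier_inv_two_pi_smul, inner_neg_right, Complex.ofReal_neg, neg_mul_neg]

theorem Real.fourier_comp_sub_right {E : Type*} [NormedAddCommGroup E] [NormedSpace ℂ E]
    (f : V → E) (l w : V) :
    𝓕 (fun x => f (x - l)) w = 𝐞 (-⟪l, w⟫_ℝ) • 𝓕 f w := by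
  rw [show (fun x => f (x - l)) = f ∘ fun x => x + -l by simp [Function.comp_def, sub_eq_add_neg]]
  exact (congrFun (VectorFourier.fourierIntegral_comp_add_right 𝐞 volume (innerₗ V) f (-l)) w).trans
    (by simp [Real.fourier_eq, VectorFourier.fourierIntegral])

end Fourier

theorem summable_inv_one_add_norm_latPt_pow {d : ℕ} {e : Fin d → Euc d}
    (he : LinearIndependent ℝ e) {n : ℕ} (hn : d < n) :
    Summable fun k : Fin d → ℤ => ((1 + ‖latPt e k‖) ^ n)⁻¹ := by
  have hcard : Fintype.card (Fin d) = Module.finrank ℝ (Euc d) := by simp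
  have := (basisOfLinearIndependentOfCardEqFinrank' e he hcard).summable_inv_one_add_norm_sum_pow
    (by simpa using hn)
  simpa [latPt] using this

theorem summable_norm_mul_inv_one_add_norm_inv_smul_latPt_pow {d : ℕ} {F : Type*}
    [SeminormedAddCommGroup F] {e : Fin d → Euc d} (he : LinearIndependent ℝ e)
    {c : (Fin d → ℤ) → F} {C N R : ℝ} (hR : 1 ≤ R)
    (hc : ∀ k, ‖c k‖ ≤ C * (1 + ‖latPt e k‖) ^ N) :
    Summable fun k => ‖c k‖ * ((1 + ‖R⁻¹ • latPt e k‖) ^ (⌈N⌉₊ + (d + 1)))⁻¹ := by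
  have hsum := summable_norm_mul_inv_one_add_pow_of_le_rpow (fun k => norm_nonneg _) hc
    (summable_inv_one_add_norm_latPt_pow he (Nat.lt_succ_self d))
  refine (hsum.mul_left (R ^ (⌈N⌉₊ + (d + 1)))).of_nonneg_of_le (fun _ => by positivity)
    fun k => ?_
  rw [mul_left_comm]
  gcongr
  exact inv_one_add_norm_inv_smul_pow_le _ hR _

theorem two_pi_rpow_mul_FT {d : ℕ} (f : Euc d → ℂ) (ξ : Euc d) :
    (((2 * Real.pi) ^ ((d:ℝ)/2) : ℝ) : ℂ) * FT f ξ = 𝓕 f ((2 * Real.pi)⁻¹ • ξ) := by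
  rw [FT, ← mul_assoc, ← Complex.ofReal_mul, ← Real.rpow_add Real.two_pi_pos, neg_div,
    add_neg_cancel, Real.rpow_zero, Complex.ofReal_one, one_mul, Real.fourier_inv_two_pi_smul]
  simp only [mul_comm (f _)]

theorem inner_latPt_latPt {d : ℕ} {e e' : Fin d → Euc d}
    (hdual : ∀ j k, ⟪e j, e' k⟫_ℝ = if j = k then 2 * Real.pi else 0) (k ι : Fin d → ℤ) :
    ⟪latPt e k, latPt e' ι⟫_ℝ = 2 * Real.pi * ((∑ j, k j * ι j : ℤ) : ℝ) := by
  simp only [latPt, sum_inner, inner_sum, real_inner_smul_left, real_inner_smul_right, hdual,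
    mul_ite, mul_zero, Finset.sum_ite_eq', Finset.mem_univ, if_true]
  push_cast
  rw [Finset.mul_sum]
  exact Finset.sum_congr rfl fun j _ => by ring

theorem fourier_comp_sub_latPt {d : ℕ} {e e' : Fin d → Euc d}
    (hdual : ∀ j k, ⟪e j, e' k⟫_ℝ = if j = k then 2 * Real.pi else 0)
    (f : Euc d → ℂ) (k ι : Fin d → ℤ) :
    𝓕 (fun x => f (x - latPt e k)) ((2 * Real.pi)⁻¹ • -latPt e' ι)
      = 𝓕 f ((2 * Real.pi)⁻¹ • -latPt e' ι) := by
  have hpairing : -⟪latPt e k, (2 * Real.pi)⁻¹ • -latPt e' ι⟫_ℝ = ((∑ j, k j * ι j : ℤ) : ℝ) := by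
    rw [real_inner_smul_right, inner_neg_right, inner_latPt_latPt hdual]
    field_simp
  rw [Real.fourier_comp_sub_right, hpairing, Real.fourierChar_intCast, one_smul]

theorem periodic_tempered_distribution_of_polynomial_coeff_general
    {d : ℕ}
    (e e' : Fin d → Euc d)
    (hdual : ∀ j k, ⟪e j, e' k⟫_ℝ = if j = k then 2 * Real.pi else 0)
    (c : (Fin d → ℤ) → ℂ) (C N : ℝ)
    (hc : ∀ ι : Fin d → ℤ, ‖c ι‖ ≤ C * (1 + ‖latPt e' ι‖) ^ N) :
    (∀ φ : SchwartzMap (Euc d) ℂ,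
      Summable fun ι : Fin d → ℤ => ‖c ι * FT (⇑φ) (-(latPt e' ι))‖) ∧
    ∃ u : SchwartzMap (Euc d) ℂ →L[ℂ] ℂ,
      (∀ φ : SchwartzMap (Euc d) ℂ,
        u φ = (((2 * Real.pi) ^ ((d:ℝ)/2) : ℝ) : ℂ) *
          ∑' ι : Fin d → ℤ, c ι * FT (⇑φ) (-(latPt e' ι))) ∧
      (∀ (φ φ' : SchwartzMap (Euc d) ℂ) (k : Fin d → ℤ),
        (∀ y : Euc d, φ' y = φ (y - latPt e k)) → u φ' = u φ) ∧
      (∀ ψ : SchwartzMap (Euc d) ℂ,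
        Tendsto
          (fun M : ℕ => ∑' ι : Fin d → ℤ,
            if ‖latPt e' ι‖ ≤ (M : ℝ) then
              c ι * ∫ x : Euc d, Complex.exp (Complex.I * (⟪x, latPt e' ι⟫_ℝ : ℂ)) * ψ x
            else 0)
          atTop (nhds (u ψ))) := by
  have he' := LinearIndependent.of_inner_eq_ite Real.two_pi_pos.ne' hdual
  have hpt : Summable fun ι => ‖c ι‖ *
      ((1 + ‖(2 * Real.pi)⁻¹ • -latPt e' ι‖) ^ (⌈N⌉₊ + (d + 1)))⁻¹ := by
    simpa only [smul_neg, norm_neg] using summable_norm_mul_inv_one_add_norm_inv_smul_latPt_pow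
      he' (by linarith [Real.pi_gt_three]) hc
  set u := (SchwartzMap.diracSumCLM hpt).comp (FourierTransform.fourierCLM ℂ 𝓢(Euc d, ℂ))
  have hFT (φ : 𝓢(Euc d, ℂ)) (ι : Fin d → ℤ) :
      (((2 * Real.pi) ^ ((d:ℝ)/2) : ℝ) : ℂ) * (c ι * FT φ (-latPt e' ι))
        = c ι * 𝓕 φ ((2 * Real.pi)⁻¹ • -latPt e' ι) := by
    rw [mul_left_comm, two_pi_rpow_mul_FT, SchwartzMap.fourier_coe]
  refine ⟨fun φ => ?_, u, fun φ => ?_, fun φ φ' k hφ' => ?_, fun ψ => ?_⟩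
  · have h0 : ‖(((2 * Real.pi) ^ ((d:ℝ)/2) : ℝ) : ℂ)‖ ≠ 0 := by
      simpa using (Real.rpow_pos_of_pos Real.two_pi_pos ((d:ℝ)/2)).ne'
    refine (summable_mul_left_iff h0).1 ?_
    simpa only [← norm_mul, hFT] using SchwartzMap.summable_norm_mul_apply hpt (𝓕 φ)
  · rw [← tsum_mul_left, tsum_congr (hFT φ)]
    rfl
  · simp only [u, ContinuousLinearMap.comp_apply, SchwartzMap.diracSumCLM_apply,
      FourierTransform.fourierCLM_apply, SchwartzMap.fourier_coe, funext hφ',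
      fourier_comp_sub_latPt hdual]
  · simp only [Real.integral_exp_inner_mul_eq_fourier]
    exact tendsto_tsum_ite_le_natCast (SchwartzMap.summable_norm_mul_apply hpt (𝓕 ψ)) _

/-- polynomially bounded Fourier coefficients define an `E`-periodic tempered
distribution `u(φ) = (2π)^{d/2} Σ_α c(α) φ̂(−α)`, which is the limit in `𝒮'` of the partial
sums `Σ_{|α| ≤ M} c(α) e^{i⟨·,α⟩}`. -/
theorem periodic_tempered_distribution_of_polynomial_coeff
    {d : ℕ} (hd : 1 ≤ d)
    (e e' : Fin d → Euc d) (he : LinearIndependent ℝ e)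
    (hdual : ∀ j k, ⟪e j, e' k⟫_ℝ = if j = k then 2 * Real.pi else 0)
    (c : (Fin d → ℤ) → ℂ) (C N : ℝ) (hC : 0 < C) (hN : 0 ≤ N)
    (hc : ∀ ι : Fin d → ℤ, ‖c ι‖ ≤ C * (1 + ‖latPt e' ι‖) ^ N) :
    (∀ φ : SchwartzMap (Euc d) ℂ,
      Summable fun ι : Fin d → ℤ => ‖c ι * FT (⇑φ) (-(latPt e' ι))‖) ∧
    ∃ u : SchwartzMap (Euc d) ℂ →L[ℂ] ℂ,
      (∀ φ : SchwartzMap (Euc d) ℂ,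
        u φ = (((2 * Real.pi) ^ ((d:ℝ)/2) : ℝ) : ℂ) *
          ∑' ι : Fin d → ℤ, c ι * FT (⇑φ) (-(latPt e' ι))) ∧
      (∀ (φ φ' : SchwartzMap (Euc d) ℂ) (k : Fin d → ℤ),
        (∀ y : Euc d, φ' y = φ (y - latPt e k)) → u φ' = u φ) ∧
      (∀ ψ : SchwartzMap (Euc d) ℂ,
        Tendsto
          (fun M : ℕ => ∑' ι : Fin d → ℤ,
            if ‖latPt e' ι‖ ≤ (M : ℝ) then
              c ι * ∫ x : Euc d, Complex.exp (Complex.I * (⟪x, latPt e' ι⟫_ℝ : ℂ)) * ψ x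
            else 0)
          atTop (nhds (u ψ))) :=
  periodic_tempered_distribution_of_polynomial_coeff_general e e' hdual c C N hc
end
end
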